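/- arXiv:1808.02397 — 7 statements merged into one kernel-verified Lean document; each statement's English description precedes it below -/
import Mathlib

section
/- Let R be a ring and S a subset of R satisfying: (i) if a,b ∈ R and ab ∈ S then a ∈ S; (ii) S is a right Ore set; (iii) every element of S is regular; (iv) the right Ore localization Q := R[S⁻¹] is directly finite. For a right R-module M, let H := Hom_R(K, M ⊗_R K) with right R-module structure (f·r)(k) = f(rk), where K := Q/R. Then for every s ∈ S, the submodule U(s) := {f ∈ H | fR ⊆ Hs} of H equals V(s) := {f ∈ H | f((Rs⁻¹)/R) = 0}, where (Rs⁻¹)/R denotes the submodule of K consisting of cosets rs⁻¹ + R with r ∈ R. -/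
/-!
STATEMENT 0: Let R be a ring and S a (multiplicatively closed) subset of R satisfying:
(i) if a,b ∈ R and ab ∈ S then a ∈ S; (ii) S is a right Ore set; (iii) every element of S
is regular; (iv) the right Ore localization Q := R[S⁻¹] is directly finite. For a right
R-module M, let H := Hom_R(K, M ⊗_R K) with right R-module structure (f·r)(k) = f(rk),
where K := Q/R. Then for every s ∈ S, the submodule U(s) := {f ∈ H | fR ⊆ Hs} of H equals
V(s) := {f ∈ H | f((Rs⁻¹)/R) = 0}.

Right `R`-modules are left `Rᵐᵒᵖ`-modules.  The localization `Q = R[S⁻¹]` is a ring with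
an injective ring homomorphism `φ : R →+* Q` such that `φ s` is invertible for `s ∈ S` and
every element of `Q` is a right fraction `φ r * (φ s)⁻¹`; it is a right `R`-module via
`op r • q = q * φ r`, and `K := Q/R` is the quotient right `R`-module, with the left
`R`-action `lmulK` descended from left multiplication in `Q`.  Since Mathlib has no tensor
product over noncommutative rings, the tensor product `M ⊗_R K` is axiomatized as a right
`R`-module `T` with a biadditive balanced map `β : M → K → T` (`R`-linear in `K`),
universal among biadditive balanced maps into abelian groups.  In `H := K →ₗ[Rᵐᵒᵖ] T`,
the product `f·r` is `f ∘ lmulK r`, so that `U(s)` and `V(s)` become the two sets below.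
-/

universe u
open MulOpposite

section Setting

variable (R Q : Type u) [Ring R] [Ring Q] (φ : R →+* Q) [Module Rᵐᵒᵖ Q]
variable (hsmul : ∀ (q : Q) (r : R), op r • q = q * φ r)

/-- The image of `R` in `Q`, as a right `R`-submodule of `Q`. -/
def rsub : Submodule Rᵐᵒᵖ Q where
  carrier := Set.range φ
  zero_mem' := ⟨0, map_zero φ⟩
  add_mem' := by rintro _ _ ⟨a, rfl⟩ ⟨b, rfl⟩; exact ⟨a + b, map_add φ a b⟩
  smul_mem' := by
    rintro c _ ⟨a, rfl⟩
    refine ⟨a * c.unop, ?_⟩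
    rw [map_mul, ← hsmul (φ a) c.unop, op_unop]

/-- `K := Q/R` as a right `R`-module. -/
abbrev kmod := Q ⧸ rsub R Q φ hsmul

/-- Left multiplication by `φ r` on `Q`, as an endomorphism of the right `R`-module `Q`. -/
def lmulQ (r : R) : Q →ₗ[Rᵐᵒᵖ] Q where
  toFun q := φ r * q
  map_add' a b := mul_add _ a b
  map_smul' c q := by
    simp only [RingHom.id_apply]
    rw [← op_unop c, hsmul, hsmul, mul_assoc]

/-- The left action of `r ∈ R` on `K = Q/R`, descended from left multiplication by `φ r`
on `Q`; this is an endomorphism of the right `R`-module `K`. -/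
def lmulK (r : R) : kmod R Q φ hsmul →ₗ[Rᵐᵒᵖ] kmod R Q φ hsmul :=
  Submodule.mapQ _ _ (lmulQ R Q φ hsmul r) (by
    rintro _ ⟨a, rfl⟩
    exact ⟨r * a, by simp [lmulQ, map_mul]⟩)

end Setting

/-!
Since `φ s` is a unit, left multiplication by `s` on `K = Q/R` is surjective with kernel the
cyclic right submodule generated by `s⁻¹ + R`. Hence `f ∘ r` factors through `s` exactly when it
kills `s⁻¹ + R`, i.e. when `f (r s⁻¹ + R) = 0`.
-/

theorem LinearMap.exists_comp_eq_iff_ker_le {A M N P : Type*} [Ring A] [AddCommGroup M]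
    [AddCommGroup N] [AddCommGroup P] [Module A M] [Module A N] [Module A P]
    {u : M →ₗ[A] N} (hu : Function.Surjective u) (F : M →ₗ[A] P) :
    (∃ g : N →ₗ[A] P, F = g.comp u) ↔ LinearMap.ker u ≤ LinearMap.ker F := by
  refine ⟨fun ⟨g, hg⟩ => hg ▸ LinearMap.ker_le_ker_comp u g, fun h => ?_⟩
  let e := u.quotKerEquivOfSurjective hu
  refine ⟨(LinearMap.ker u).liftQ F h ∘ₗ e.symm.toLinearMap, LinearMap.ext fun m => ?_⟩
  have he : e.symm (u m) = Submodule.Quotient.mk m := e.symm_apply_eq.mpr rfl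
  rw [LinearMap.comp_apply, LinearMap.comp_apply, LinearEquiv.coe_coe, he, Submodule.liftQ_apply]

section LeftMultiplication

variable {R Q : Type u} [Ring R] [Ring Q] {φ : R →+* Q} [Module Rᵐᵒᵖ Q]
  {hsmul : ∀ (q : Q) (r : R), op r • q = q * φ r}

@[simp]
theorem lmulK_mk (r : R) (q : Q) :
    lmulK R Q φ hsmul r (Submodule.Quotient.mk q) = Submodule.Quotient.mk (φ r * q) :=
  rfl

theorem op_smul_mk (a : R) (q : Q) :
    op a • (Submodule.Quotient.mk q : kmod R Q φ hsmul) = Submodule.Quotient.mk (q * φ a) := by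
  rw [← Submodule.Quotient.mk_smul, hsmul]

theorem lmulK_surjective {s : R} (hs : IsUnit (φ s)) :
    Function.Surjective (lmulK R Q φ hsmul s) := by
  intro k
  obtain ⟨q, rfl⟩ := Submodule.Quotient.mk_surjective _ k
  refine ⟨Submodule.Quotient.mk (Ring.inverse (φ s) * q), ?_⟩
  rw [lmulK_mk, ← mul_assoc, Ring.mul_inverse_cancel _ hs, one_mul]

theorem ker_lmulK {s : R} (hs : IsUnit (φ s)) :
    LinearMap.ker (lmulK R Q φ hsmul s) =
      Rᵐᵒᵖ ∙ (Submodule.Quotient.mk (Ring.inverse (φ s)) : kmod R Q φ hsmul) := by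
  refine le_antisymm (fun k hk => ?_) ((Submodule.span_singleton_le_iff_mem _ _).mpr ?_)
  · obtain ⟨q, rfl⟩ := Submodule.Quotient.mk_surjective _ k
    rw [LinearMap.mem_ker, lmulK_mk, Submodule.Quotient.mk_eq_zero] at hk
    obtain ⟨a, ha⟩ := hk
    refine Submodule.mem_span_singleton.mpr ⟨op a, ?_⟩
    rw [op_smul_mk, ha, ← mul_assoc, Ring.inverse_mul_cancel _ hs, one_mul]
  · rw [LinearMap.mem_ker, lmulK_mk, Ring.mul_inverse_cancel _ hs, Submodule.Quotient.mk_eq_zero]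
    exact ⟨1, map_one φ⟩

end LeftMultiplication

theorem stmt0_general (R Q : Type u) [Ring R] [Ring Q] (S : Submonoid R) (φ : R →+* Q)
    [Module Rᵐᵒᵖ Q] (hsmul : ∀ (q : Q) (r : R), op r • q = q * φ r)
    -- `Q` is the right Ore localization `R[S⁻¹]`
    (hunit : ∀ s ∈ S, IsUnit (φ s))
    -- a right `R`-module `M` and the tensor product `T = M ⊗_R K`
    (T : Type u) [AddCommGroup T] [Module Rᵐᵒᵖ T]
    (s : R) (hs : s ∈ S) :
    -- U(s) = {f ∈ H | fR ⊆ Hs}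
    {f : kmod R Q φ hsmul →ₗ[Rᵐᵒᵖ] T | ∀ r : R, ∃ g : kmod R Q φ hsmul →ₗ[Rᵐᵒᵖ] T,
        f.comp (lmulK R Q φ hsmul r) = g.comp (lmulK R Q φ hsmul s)} =
    -- V(s) = {f ∈ H | f((Rs⁻¹)/R) = 0}
    {f : kmod R Q φ hsmul →ₗ[Rᵐᵒᵖ] T | ∀ r : R,
        f (Submodule.Quotient.mk (φ r * Ring.inverse (φ s))) = 0} := by
  have hu := hunit s hs
  ext f
  refine forall_congr' fun r => ?_
  rw [LinearMap.exists_comp_eq_iff_ker_le (lmulK_surjective hu), ker_lmulK hu,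
    Submodule.span_singleton_le_iff_mem, LinearMap.mem_ker, LinearMap.comp_apply, lmulK_mk]

theorem stmt0 (R Q : Type u) [Ring R] [Ring Q] (S : Submonoid R) (φ : R →+* Q)
    [Module Rᵐᵒᵖ Q] (hsmul : ∀ (q : Q) (r : R), op r • q = q * φ r)
    -- (i) `ab ∈ S` implies `a ∈ S`
    (hsat : ∀ a b : R, a * b ∈ S → a ∈ S)
    -- (ii) `S` is a right Ore set
    (hOre : ∀ (r : R), ∀ s ∈ S, ∃ (r' s' : R), s' ∈ S ∧ r * s' = s * r')
    -- (iii) the elements of `S` are regular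
    (hreg : ∀ s ∈ S, IsRegular s)
    -- (iv) `Q` is directly finite
    (hdf : ∀ a b : Q, a * b = 1 → b * a = 1)
    -- `Q` is the right Ore localization `R[S⁻¹]`
    (hinj : Function.Injective φ)
    (hunit : ∀ s ∈ S, IsUnit (φ s))
    (hfrac : ∀ q : Q, ∃ (r : R) (s : R), s ∈ S ∧ q * φ s = φ r)
    -- a right `R`-module `M` and the tensor product `T = M ⊗_R K`
    (M T : Type u) [AddCommGroup M] [Module Rᵐᵒᵖ M] [AddCommGroup T] [Module Rᵐᵒᵖ T]
    (β : M → kmod R Q φ hsmul → T)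
    (hβ1 : ∀ x y k, β (x + y) k = β x k + β y k)
    (hβ2 : ∀ x k k', β x (k + k') = β x k + β x k')
    (hbal : ∀ (x : M) (r : R) (k : kmod R Q φ hsmul),
      β (op r • x) k = β x (lmulK R Q φ hsmul r k))
    (hlin : ∀ (x : M) (r : R) (k : kmod R Q φ hsmul), β x (op r • k) = op r • β x k)
    (huniv : ∀ (A : Type u) [AddCommGroup A] (b : M → kmod R Q φ hsmul → A),
      (∀ x y k, b (x + y) k = b x k + b y k) →
      (∀ x k k', b x (k + k') = b x k + b x k') →
      (∀ (x : M) (r : R) (k : kmod R Q φ hsmul),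
        b (op r • x) k = b x (lmulK R Q φ hsmul r k)) →
      ∃! h : T →+ A, ∀ x k, h (β x k) = b x k)
    (s : R) (hs : s ∈ S) :
    -- U(s) = {f ∈ H | fR ⊆ Hs}
    {f : kmod R Q φ hsmul →ₗ[Rᵐᵒᵖ] T | ∀ r : R, ∃ g : kmod R Q φ hsmul →ₗ[Rᵐᵒᵖ] T,
        f.comp (lmulK R Q φ hsmul r) = g.comp (lmulK R Q φ hsmul s)} =
    -- V(s) = {f ∈ H | f((Rs⁻¹)/R) = 0}
    {f : kmod R Q φ hsmul →ₗ[Rᵐᵒᵖ] T | ∀ r : R,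
        f (Submodule.Quotient.mk (φ r * Ring.inverse (φ s))) = 0} :=
  stmt0_general R Q S φ hsmul hunit T s hs
end

section
/- Let R be a ring and S a subset of R satisfying: (i) if ab ∈ S then a ∈ S; (ii) S is a right Ore set; (iii) every element of S is regular; (iv) Q := R[S⁻¹] is directly finite. Then every divisible torsion-free right R-module M admits a (necessarily unique) right Q-module structure extending its right R-module structure. In particular, for any torsion-free right R-module M, the largest h-divisible submodule h(M) equals the largest divisible submodule d(M). -/
/-!
STATEMENT 1: Let R be a ring and S a subset of R satisfying: (i) if ab ∈ S then a ∈ S;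
(ii) S is a right Ore set; (iii) every element of S is regular; (iv) Q := R[S⁻¹] is
directly finite. Then every divisible torsion-free right R-module M admits a (necessarily
unique) right Q-module structure extending its right R-module structure. In particular,
for any torsion-free right R-module M, the largest h-divisible submodule h(M) equals the
largest divisible submodule d(M).

Right `R`-modules are left `Rᵐᵒᵖ`-modules.  The localization is a ring `Q` with an
injective ring homomorphism `φ : R →+* Q` such that `φ s` is invertible for `s ∈ S` and
every element of `Q` is a right fraction `φ r * (φ s)⁻¹`; it is a right `R`-module via
`op r • q = q * φ r`.  `M` is torsion-free when right multiplication by each `s ∈ S` is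
injective and divisible when `Ms = M` for all `s ∈ S`; `d(M)` is the largest divisible
submodule (the supremum of all divisible submodules) and `h(M)` is the largest
h-divisible submodule (the supremum of all submodules `N` such that every element of `N`
is the value at `1` of a homomorphism `Q → M` of right `R`-modules with range inside `N`).
-/

universe u
open MulOpposite

section Defs

variable (R : Type u) [Ring R] (S : Submonoid R)
variable (M : Type u) [AddCommGroup M] [Module Rᵐᵒᵖ M]

/-- `d(M)`: the largest divisible submodule of the right `R`-module `M`, i.e. the
supremum of all submodules `N` with `Ns = N` for every `s ∈ S`. -/
def divSub : Submodule Rᵐᵒᵖ M :=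
  sSup {N : Submodule Rᵐᵒᵖ M | ∀ s ∈ S, ∀ y ∈ N, ∃ z ∈ N, y = op s • z}

variable (Q : Type u) [Ring Q] [Module Rᵐᵒᵖ Q]

/-- `h(M)`: the largest h-divisible submodule of the right `R`-module `M`, i.e. the
supremum of all submodules every element of which is the image of `1 ∈ Q` under a
homomorphism of right `R`-modules `Q → M` with range contained in the submodule.
(A homomorphism `R → M` extends to `Q → M` precisely when its value at `1` is such.) -/
def hdivSub : Submodule Rᵐᵒᵖ M :=
  sSup {N : Submodule Rᵐᵒᵖ M |
    ∀ y ∈ N, ∃ g : Q →ₗ[Rᵐᵒᵖ] M, LinearMap.range g ≤ N ∧ g 1 = y}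

end Defs

/-!
For `q ∈ Q` written as a right fraction `q * φ s = φ r` with `s ∈ S`, the only possible value of
`x • q` is the unique `y` with `y s = x r`: it exists by divisibility, is unique by
torsion-freeness, and does not depend on the chosen fraction by the Ore condition. The module
axioms are checked by bringing fractions to a common denominator and cancelling it.

For `h(M) = d(M)`: an h-divisible submodule is divisible because each `φ s` is invertible in `Q`.
Conversely `d(M)` is itself divisible and torsion-free, hence a right `Q`-module, so each
`y ∈ d(M)` is the value at `1` of the `R`-linear map `q ↦ y • q` from `Q` into `d(M)`.
-/

section Predicates

variable {R : Type*} [Ring R] (S : Submonoid R) (M : Type*) [AddCommGroup M] [Module Rᵐᵒᵖ M]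

def IsTorsionFreeBy : Prop := ∀ s ∈ S, ∀ x : M, op s • x = 0 → x = 0

def IsDivisibleBy : Prop := ∀ s ∈ S, ∀ y : M, ∃ x : M, y = op s • x

variable {S M}

theorem IsTorsionFreeBy.smul_cancel (tf : IsTorsionFreeBy S M) {s : R} (hs : s ∈ S) {x y : M}
    (h : op s • x = op s • y) : x = y :=
  sub_eq_zero.mp (tf s hs _ (by rw [smul_sub, h, sub_self]))

theorem IsTorsionFreeBy.submodule (tf : IsTorsionFreeBy S M) (N : Submodule Rᵐᵒᵖ M) :
    IsTorsionFreeBy S N :=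
  fun s hs x hx => Subtype.ext (tf s hs x (congrArg Subtype.val hx))

end Predicates

section FractionAction

variable {R Q M : Type*} [Ring R] [Ring Q] [AddCommGroup M] [Module Rᵐᵒᵖ M]
  {S : Submonoid R} {φ : R →+* Q}

theorem smul_eq_smul_of_mul_eq (tf : IsTorsionFreeBy S M)
    (hOre : ∀ (r : R), ∀ s ∈ S, ∃ (r' s' : R), s' ∈ S ∧ r * s' = s * r')
    (hinj : Function.Injective φ) {q : Q} {r s r₀ s₀ : R} (hs₀ : s₀ ∈ S)
    (h : q * φ s = φ r) (h₀ : q * φ s₀ = φ r₀) {x y : M} (hy : op s₀ • y = op r₀ • x) :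
    op s • y = op r • x := by
  obtain ⟨a, b, hb, hab⟩ := hOre s s₀ hs₀
  have hrb : r * b = r₀ * a := hinj <| by
    rw [map_mul, map_mul, ← h, ← h₀, mul_assoc, mul_assoc, ← map_mul, ← map_mul, hab]
  refine tf.smul_cancel hb ?_
  calc op b • op s • y = op a • op s₀ • y := by
        rw [← mul_smul, ← mul_smul, ← op_mul, ← op_mul, hab]
    _ = op b • op r • x := by rw [hy, ← mul_smul, ← mul_smul, ← op_mul, ← op_mul, hrb]

theorem exists_common_denominator
    (hOre : ∀ (r : R), ∀ s ∈ S, ∃ (r' s' : R), s' ∈ S ∧ r * s' = s * r')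
    (hfrac : ∀ q : Q, ∃ (r : R) (s : R), s ∈ S ∧ q * φ s = φ r) (q₁ q₂ : Q) :
    ∃ r₁ r₂ s : R, s ∈ S ∧ q₁ * φ s = φ r₁ ∧ q₂ * φ s = φ r₂ := by
  obtain ⟨r₁, s₁, hs₁, h₁⟩ := hfrac q₁
  obtain ⟨r₂, s₂, hs₂, h₂⟩ := hfrac q₂
  obtain ⟨a, b, hb, hab⟩ := hOre s₂ s₁ hs₁
  refine ⟨r₁ * a, r₂ * b, s₂ * b, S.mul_mem hs₂ hb, ?_, ?_⟩
  · rw [hab, map_mul, map_mul, ← mul_assoc, h₁]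
  · rw [map_mul, map_mul, ← mul_assoc, h₂]

variable (hOre : ∀ (r : R), ∀ s ∈ S, ∃ (r' s' : R), s' ∈ S ∧ r * s' = s * r')
  (hinj : Function.Injective φ)
  (hfrac : ∀ q : Q, ∃ (r : R) (s : R), s ∈ S ∧ q * φ s = φ r)
  (tf : IsTorsionFreeBy S M) (dv : IsDivisibleBy S M)

variable (φ) in
noncomputable def fracSMul (q : Q) (x : M) : M :=
  have hrs := (hfrac q).choose_spec
  (dv _ hrs.choose_spec.1 (op (hfrac q).choose • x)).choose

include hOre hinj tf

theorem smul_fracSMul_of_mul_eq {q : Q} {r s : R} (h : q * φ s = φ r) (x : M) :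
    op s • fracSMul φ hfrac dv q x = op r • x :=
  have hrs := (hfrac q).choose_spec
  smul_eq_smul_of_mul_eq tf hOre hinj hrs.choose_spec.1 h hrs.choose_spec.2
    (dv _ hrs.choose_spec.1 _).choose_spec.symm

theorem fracSMul_map (r : R) (x : M) : fracSMul φ hfrac dv (φ r) x = op r • x := by
  simpa using smul_fracSMul_of_mul_eq hOre hinj hfrac tf dv (s := 1) (by rw [map_one, mul_one]) x

theorem fracSMul_add_left (q₁ q₂ : Q) (x : M) :
    fracSMul φ hfrac dv (q₁ + q₂) x = fracSMul φ hfrac dv q₁ x + fracSMul φ hfrac dv q₂ x := by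
  obtain ⟨r₁, r₂, s, hs, h₁, h₂⟩ := exists_common_denominator hOre hfrac q₁ q₂
  have h : (q₁ + q₂) * φ s = φ (r₁ + r₂) := by rw [add_mul, h₁, h₂, map_add]
  refine tf.smul_cancel hs ?_
  rw [smul_add, smul_fracSMul_of_mul_eq hOre hinj hfrac tf dv h,
    smul_fracSMul_of_mul_eq hOre hinj hfrac tf dv h₁,
    smul_fracSMul_of_mul_eq hOre hinj hfrac tf dv h₂, op_add, add_smul]

theorem fracSMul_add_right (q : Q) (x y : M) :
    fracSMul φ hfrac dv q (x + y) = fracSMul φ hfrac dv q x + fracSMul φ hfrac dv q y := by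
  obtain ⟨r, s, hs, h⟩ := hfrac q
  refine tf.smul_cancel hs ?_
  rw [smul_add, smul_fracSMul_of_mul_eq hOre hinj hfrac tf dv h,
    smul_fracSMul_of_mul_eq hOre hinj hfrac tf dv h,
    smul_fracSMul_of_mul_eq hOre hinj hfrac tf dv h, smul_add]

theorem fracSMul_mul (q₁ q₂ : Q) (x : M) :
    fracSMul φ hfrac dv (q₁ * q₂) x = fracSMul φ hfrac dv q₂ (fracSMul φ hfrac dv q₁ x) := by
  obtain ⟨r₁, s₁, hs₁, h₁⟩ := hfrac q₁
  obtain ⟨r₂, s₂, hs₂, h₂⟩ := hfrac q₂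
  obtain ⟨a, b, hb, hab⟩ := hOre r₂ s₁ hs₁
  have h : q₁ * q₂ * φ (s₂ * b) = φ (r₁ * a) := by
    rw [map_mul, mul_assoc, ← mul_assoc q₂, h₂, ← map_mul, hab, map_mul, ← mul_assoc, h₁,
      ← map_mul]
  set z := fracSMul φ hfrac dv q₁ x
  set w := fracSMul φ hfrac dv q₂ z
  have hz : op s₁ • z = op r₁ • x := smul_fracSMul_of_mul_eq hOre hinj hfrac tf dv h₁ x
  have hw : op s₂ • w = op r₂ • z := smul_fracSMul_of_mul_eq hOre hinj hfrac tf dv h₂ z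
  refine tf.smul_cancel (S.mul_mem hs₂ hb) ?_
  calc op (s₂ * b) • fracSMul φ hfrac dv (q₁ * q₂) x = op a • op r₁ • x := by
        rw [smul_fracSMul_of_mul_eq hOre hinj hfrac tf dv h, op_mul, mul_smul]
    _ = op (s₂ * b) • w := by
        rw [← hz, ← mul_smul, ← op_mul, ← hab, op_mul, mul_smul, ← hw, op_mul, mul_smul]

noncomputable abbrev fracModule : Module Qᵐᵒᵖ M :=
  letI : SMul Qᵐᵒᵖ M := ⟨fun a x => fracSMul φ hfrac dv a.unop x⟩
  Module.ofMinimalAxioms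
    (fun a => fracSMul_add_right hOre hinj hfrac tf dv a.unop)
    (fun a b => fracSMul_add_left hOre hinj hfrac tf dv a.unop b.unop)
    (fun a b => fracSMul_mul hOre hinj hfrac tf dv b.unop a.unop)
    (fun x => by
      change fracSMul φ hfrac dv 1 x = x
      simpa using fracSMul_map hOre hinj hfrac tf dv 1 x)

theorem fracModule_smul_op_map (r : R) (x : M) :
    @SMul.smul Qᵐᵒᵖ M (fracModule hOre hinj hfrac tf dv).toDistribMulAction.toMulAction.toSMul
      (op (φ r)) x = op r • x :=
  fracSMul_map hOre hinj hfrac tf dv r x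

theorem eq_fracModule [mQ : Module Qᵐᵒᵖ M]
    (hc : ∀ (r : R) (x : M), (op (φ r) : Qᵐᵒᵖ) • x = op r • x) :
    mQ = fracModule hOre hinj hfrac tf dv := by
  refine Module.ext' mQ _ fun a x => ?_
  obtain ⟨r, s, hs, h⟩ := hfrac a.unop
  refine tf.smul_cancel hs ?_
  change op s • a • x = op s • fracSMul φ hfrac dv a.unop x
  rw [smul_fracSMul_of_mul_eq hOre hinj hfrac tf dv h, ← hc, ← hc, ← mul_smul, ← op_unop a,
    ← op_mul, h]

end FractionAction

section OrbitMap

variable {R Q M : Type*} [Ring R] [Ring Q] [Module Rᵐᵒᵖ Q] [AddCommGroup M] [Module Rᵐᵒᵖ M]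
  [Module Qᵐᵒᵖ M] {φ : R →+* Q}

def orbitLinearMap (hsmul : ∀ (q : Q) (r : R), op r • q = q * φ r)
    (hc : ∀ (r : R) (x : M), (op (φ r) : Qᵐᵒᵖ) • x = op r • x) (x : M) : Q →ₗ[Rᵐᵒᵖ] M where
  toFun q := op q • x
  map_add' q₁ q₂ := by rw [op_add, add_smul]
  map_smul' c q := by
    induction c using MulOpposite.rec' with
    | h r => rw [hsmul, op_mul, mul_smul, hc]; rfl

end OrbitMap

section LargestSubmodules

variable {R Q M : Type u} [Ring R] [Ring Q] [Module Rᵐᵒᵖ Q] [AddCommGroup M] [Module Rᵐᵒᵖ M]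
  {S : Submonoid R} {φ : R →+* Q}

theorem isDivisibleBy_divSub : IsDivisibleBy S (divSub R S M) := by
  rintro s hs ⟨y, hy⟩
  rw [divSub, sSup_eq_iSup'] at hy
  obtain ⟨z, hz, rfl⟩ : ∃ z ∈ divSub R S M, y = op s • z := by
    refine Submodule.iSup_induction _ (motive := fun y => ∃ z ∈ divSub R S M, y = op s • z) hy
      ?_ ⟨0, zero_mem _, (smul_zero _).symm⟩ ?_
    · rintro ⟨N, hN⟩ y hy
      obtain ⟨z, hz, rfl⟩ := hN s hs y hy
      exact ⟨z, le_sSup hN hz, rfl⟩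
    · rintro _ _ ⟨z₁, hz₁, rfl⟩ ⟨z₂, hz₂, rfl⟩
      exact ⟨z₁ + z₂, add_mem hz₁ hz₂, (smul_add _ _ _).symm⟩
  exact ⟨⟨z, hz⟩, rfl⟩

theorem hdivSub_le_divSub (hsmul : ∀ (q : Q) (r : R), op r • q = q * φ r)
    (hunit : ∀ s ∈ S, IsUnit (φ s)) : hdivSub R M Q ≤ divSub R S M := by
  refine sSup_le fun N hN => le_sSup fun s hs y hy => ?_
  obtain ⟨g, hg, rfl⟩ := hN y hy
  refine ⟨g ↑(hunit s hs).unit⁻¹, hg ⟨_, rfl⟩, ?_⟩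
  rw [← g.map_smul, hsmul, IsUnit.val_inv_mul]

theorem divSub_le_hdivSub (hsmul : ∀ (q : Q) (r : R), op r • q = q * φ r)
    (hOre : ∀ (r : R), ∀ s ∈ S, ∃ (r' s' : R), s' ∈ S ∧ r * s' = s * r')
    (hinj : Function.Injective φ)
    (hfrac : ∀ q : Q, ∃ (r : R) (s : R), s ∈ S ∧ q * φ s = φ r)
    (tf : IsTorsionFreeBy S M) : divSub R S M ≤ hdivSub R M Q := by
  set D := divSub R S M
  let := fracModule hOre hinj hfrac (tf.submodule D) isDivisibleBy_divSub
  refine le_sSup fun y hy => ⟨D.subtype ∘ₗ orbitLinearMap hsmul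
    (fracModule_smul_op_map hOre hinj hfrac (tf.submodule D) isDivisibleBy_divSub) ⟨y, hy⟩,
    ?_, ?_⟩
  · rintro _ ⟨q, rfl⟩
    exact (op q • _ : D).2
  · simp [orbitLinearMap]

end LargestSubmodules

theorem stmt1_general (R Q : Type u) [Ring R] [Ring Q] (S : Submonoid R) (φ : R →+* Q)
    [Module Rᵐᵒᵖ Q] (hsmul : ∀ (q : Q) (r : R), op r • q = q * φ r)
    -- (ii) `S` is a right Ore set
    (hOre : ∀ (r : R), ∀ s ∈ S, ∃ (r' s' : R), s' ∈ S ∧ r * s' = s * r')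
    -- `Q` is the right Ore localization `R[S⁻¹]`
    (hinj : Function.Injective φ)
    (hunit : ∀ s ∈ S, IsUnit (φ s))
    (hfrac : ∀ q : Q, ∃ (r : R) (s : R), s ∈ S ∧ q * φ s = φ r) :
    -- every divisible torsion-free right `R`-module has a unique right `Q`-module
    -- structure extending its right `R`-module structure
    (∀ (M : Type u) [AddCommGroup M] [Module Rᵐᵒᵖ M],
      (∀ s ∈ S, ∀ x : M, op s • x = 0 → x = 0) →
      (∀ s ∈ S, ∀ y : M, ∃ x : M, y = op s • x) →
      ∃! mQ : Module Qᵐᵒᵖ M, ∀ (r : R) (x : M),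
        @SMul.smul Qᵐᵒᵖ M (mQ.toDistribMulAction.toMulAction.toSMul) (op (φ r)) x
          = op r • x) ∧
    -- for every torsion-free right `R`-module, `h(M) = d(M)`
    (∀ (M : Type u) [AddCommGroup M] [Module Rᵐᵒᵖ M],
      (∀ s ∈ S, ∀ x : M, op s • x = 0 → x = 0) →
      hdivSub R M Q = divSub R S M) := by
  refine ⟨fun M _ _ tf dv => ⟨fracModule hOre hinj hfrac tf dv,
    fracModule_smul_op_map hOre hinj hfrac tf dv, fun mQ hmQ => ?_⟩, fun M _ _ tf => ?_⟩
  · exact eq_fracModule (mQ := mQ) hOre hinj hfrac tf dv hmQ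
  · exact (hdivSub_le_divSub hsmul hunit).antisymm (divSub_le_hdivSub hsmul hOre hinj hfrac tf)

theorem stmt1 (R Q : Type u) [Ring R] [Ring Q] (S : Submonoid R) (φ : R →+* Q)
    [Module Rᵐᵒᵖ Q] (hsmul : ∀ (q : Q) (r : R), op r • q = q * φ r)
    -- (i) `ab ∈ S` implies `a ∈ S`
    (hsat : ∀ a b : R, a * b ∈ S → a ∈ S)
    -- (ii) `S` is a right Ore set
    (hOre : ∀ (r : R), ∀ s ∈ S, ∃ (r' s' : R), s' ∈ S ∧ r * s' = s * r')
    -- (iii) the elements of `S` are regular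
    (hreg : ∀ s ∈ S, IsRegular s)
    -- (iv) `Q` is directly finite
    (hdf : ∀ a b : Q, a * b = 1 → b * a = 1)
    -- `Q` is the right Ore localization `R[S⁻¹]`
    (hinj : Function.Injective φ)
    (hunit : ∀ s ∈ S, IsUnit (φ s))
    (hfrac : ∀ q : Q, ∃ (r : R) (s : R), s ∈ S ∧ q * φ s = φ r) :
    -- every divisible torsion-free right `R`-module has a unique right `Q`-module
    -- structure extending its right `R`-module structure
    (∀ (M : Type u) [AddCommGroup M] [Module Rᵐᵒᵖ M],
      (∀ s ∈ S, ∀ x : M, op s • x = 0 → x = 0) →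
      (∀ s ∈ S, ∀ y : M, ∃ x : M, y = op s • x) →
      ∃! mQ : Module Qᵐᵒᵖ M, ∀ (r : R) (x : M),
        @SMul.smul Qᵐᵒᵖ M (mQ.toDistribMulAction.toMulAction.toSMul) (op (φ r)) x
          = op r • x) ∧
    -- for every torsion-free right `R`-module, `h(M) = d(M)`
    (∀ (M : Type u) [AddCommGroup M] [Module Rᵐᵒᵖ M],
      (∀ s ∈ S, ∀ x : M, op s • x = 0 → x = 0) →
      hdivSub R M Q = divSub R S M) :=
  stmt1_general R Q S φ hsmul hOre hinj hunit hfrac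
end

section
/- Let R be a ring and S a subset of R satisfying: (i) if ab ∈ S then a ∈ S; (ii) S is a right Ore set; (iii) every element of S is regular; (iv) Q := R[S⁻¹] is directly finite; set K := Q/R. Let M be an h-reduced torsion-free right R-module. Then the canonical map λ : M → Hom_R(K, M ⊗_R K), λ(x)(k) = x ⊗ k, is an embedding of topological modules (injective, continuous, and a homeomorphism onto its image) when both modules carry their R-topologies, and Hom_R(K, M ⊗_R K) is complete in its R-topology, i.e., every Cauchy net converges. -/
/-!
STATEMENT 2: Let R be a ring and S a subset of R satisfying: (i) if ab ∈ S then a ∈ S;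
(ii) S is a right Ore set; (iii) every element of S is regular; (iv) Q := R[S⁻¹] is
directly finite; set K := Q/R. Let M be an h-reduced torsion-free right R-module. Then the
canonical map λ : M → Hom_R(K, M ⊗_R K), λ(x)(k) = x ⊗ k, is an embedding of topological
modules when both carry their R-topologies, and Hom_R(K, M ⊗_R K) is complete in its
R-topology, i.e. every Cauchy net converges.

Right `R`-modules are left `Rᵐᵒᵖ`-modules; the localization `Q = R[S⁻¹]`, the right
`R`-module `K := Q/R` with its left `R`-action `lmulK`, and the tensor product
`T = M ⊗_R K` (axiomatized by its universal property, since Mathlib has no tensor product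
over noncommutative rings) are as in the accompanying formalizations.  The `R`-topology
has as neighborhood base of `0` the finite intersections of the submodules
`U(s) = {x | xR ⊆ Ms}`, `s ∈ S`; in `H = Hom_R(K, M ⊗_R K)`, whose right `R`-module
structure is `(f·r) = f ∘ lmulK r`, these are the sets `uhset` below.  That `λ` is a
topological embedding is expressed by: `λ` is injective and the `λ`-preimage of a basic
neighborhood of `0` in `H` is the corresponding basic neighborhood of `0` in `M` (so the
topology of `M` is exactly the topology induced via `λ`).  Completeness is expressed by
the convergence of every Cauchy net indexed by an arbitrary directed preordered type.
-/

universe u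
open MulOpposite

section Setting

variable (R Q : Type u) [Ring R] [Ring Q] (φ : R →+* Q) [Module Rᵐᵒᵖ Q]
variable (hsmul : ∀ (q : Q) (r : R), op r • q = q * φ r)

variable (M : Type u) [AddCommGroup M] [Module Rᵐᵒᵖ M]

/-- `U(s) = {x ∈ M | xR ⊆ Ms}`: a basic neighborhood of `0` in the `R`-topology of the
right `R`-module `M`. -/
def umset (s : R) : Set M := {x : M | ∀ r : R, ∃ m : M, op r • x = op s • m}

variable (T : Type u) [AddCommGroup T] [Module Rᵐᵒᵖ T]

/-- `U(s)` for the right `R`-module `H = Hom_R(K, T)` whose module structure is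
`(f·r) = f ∘ lmulK r`: the set of `f` with `fR ⊆ Hs`. -/
def uhset (s : R) : Set (kmod R Q φ hsmul →ₗ[Rᵐᵒᵖ] T) :=
  {f | ∀ r : R, ∃ g : kmod R Q φ hsmul →ₗ[Rᵐᵒᵖ] T,
    f.comp (lmulK R Q φ hsmul r) = g.comp (lmulK R Q φ hsmul s)}

variable (β : M → kmod R Q φ hsmul → T)
variable (hβ2 : ∀ x k k', β x (k + k') = β x k + β x k')
variable (hlin : ∀ (x : M) (r : R) (k : kmod R Q φ hsmul), β x (op r • k) = op r • β x k)

/-- The canonical map `λ : M → Hom_R(K, M ⊗_R K)`, `λ(x)(k) = x ⊗ k`. -/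
def lam : M → (kmod R Q φ hsmul →ₗ[Rᵐᵒᵖ] T) := fun x =>
  { toFun := β x
    map_add' := hβ2 x
    map_smul' := fun c k => by
      simp only [RingHom.id_apply]
      rw [← op_unop c]
      exact hlin x c.unop k }

end Setting


namespace Stmt2Aux
open OreLocalization

section KLemmas

variable (R Q : Type u) [Ring R] [Ring Q] (φ : R →+* Q) [Module Rᵐᵒᵖ Q]
variable (hsmul : ∀ (q : Q) (r : R), op r • q = q * φ r)

theorem mk_smul (q : Q) (r : R) :
    (op r • Submodule.Quotient.mk q : kmod R Q φ hsmul) = Submodule.Quotient.mk (q * φ r) := by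
  rw [← Submodule.Quotient.mk_smul, hsmul]

theorem lmulK_mk (r : R) (q : Q) :
    lmulK R Q φ hsmul r (Submodule.Quotient.mk q) = Submodule.Quotient.mk (φ r * q) := by
  simp [lmulK, Submodule.mapQ_apply, lmulQ]

theorem mk_eq_zero_iff (q : Q) :
    (Submodule.Quotient.mk q : kmod R Q φ hsmul) = 0 ↔ ∃ a : R, φ a = q := by
  rw [Submodule.Quotient.mk_eq_zero]
  exact Iff.rfl

theorem mk_one_zero : (Submodule.Quotient.mk (1 : Q) : kmod R Q φ hsmul) = 0 :=
  (mk_eq_zero_iff R Q φ hsmul 1).2 ⟨1, map_one φ⟩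

end KLemmas

section OreSetup

variable {R : Type u} [Ring R] {S : Submonoid R}

/-- The Ore set structure on `S.op ⊆ Rᵐᵒᵖ` coming from the right Ore condition on `S`. -/
noncomputable def mkOreSet (hOre : ∀ (r : R), ∀ s ∈ S, ∃ (r' s' : R), s' ∈ S ∧ r * s' = s * r')
    (hreg : ∀ s ∈ S, IsRegular s) : OreSet S.op where
  ore_right_cancel r₁ r₂ s h := by
    refine ⟨1, ?_⟩
    have h' : unop s * unop r₁ = unop s * unop r₂ := by
      have := congrArg unop h
      simpa using this
    have : unop r₁ = unop r₂ := (hreg _ (Submonoid.mem_op.1 s.2)).left h'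
    simp [unop_injective this]
  oreNum r s := op (hOre (unop r) (unop s.1) (Submonoid.mem_op.1 s.2)).choose
  oreDenom r s := ⟨op (hOre (unop r) (unop s.1) (Submonoid.mem_op.1 s.2)).choose_spec.choose,
    Submonoid.mem_op.2 (by
      simpa using (hOre (unop r) (unop s.1) (Submonoid.mem_op.1 s.2)).choose_spec.choose_spec.1)⟩
  ore_eq r s := by
    have h := (hOre (unop r) (unop s.1) (Submonoid.mem_op.1 s.2)).choose_spec.choose_spec.2
    apply unop_injective
    simpa using h

end OreSetup

end Stmt2Aux

namespace Stmt2Aux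
open OreLocalization

section Loc

variable {R Q : Type u} [Ring R] [Ring Q] {S : Submonoid R} (φ : R →+* Q) [Module Rᵐᵒᵖ Q]
variable [OreSet S.op]
variable (hunit : ∀ s ∈ S, IsUnit (φ s))

set_option linter.unusedSectionVars false

/-- `S.op` mapped to the units of `Qᵐᵒᵖ`. -/
noncomputable def fSmap : S.op →* Qᵐᵒᵖˣ where
  toFun s :=
    { val := op (φ (unop s.1))
      inv := op (↑(hunit (unop s.1) (Submonoid.mem_op.1 s.2)).unit⁻¹)
      val_inv := by
        rw [← op_mul, (hunit (unop s.1) (Submonoid.mem_op.1 s.2)).val_inv_mul, op_one]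
      inv_val := by
        rw [← op_mul, (hunit (unop s.1) (Submonoid.mem_op.1 s.2)).mul_val_inv, op_one] }
  map_one' := by
    apply Units.ext
    simp
  map_mul' s t := by
    apply Units.ext
    show op (φ (unop ((s : Rᵐᵒᵖ) * t))) = op (φ (unop s.1)) * op (φ (unop t.1))
    rw [unop_mul, map_mul, op_mul]

theorem fSmap_spec (s : S.op) : (RingHom.op φ) (s : Rᵐᵒᵖ) = ((fSmap φ hunit s : Qᵐᵒᵖˣ) : Qᵐᵒᵖ) :=
  rfl

theorem fSmap_inv_val (s : S.op) :
    (((fSmap φ hunit s)⁻¹ : Qᵐᵒᵖˣ) : Qᵐᵒᵖ)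
      = op (↑(hunit (unop s.1) (Submonoid.mem_op.1 s.2)).unit⁻¹) :=
  rfl

theorem inv_cancel_right {a b c : Q} (h : IsUnit b) (heq : c * b = a) :
    a * ↑h.unit⁻¹ = c := by
  rw [← heq, mul_assoc, h.mul_val_inv, mul_one]

/-- The canonical homomorphism `Rᵐᵒᵖ[S.op⁻¹] →+* Qᵐᵒᵖ`. -/
noncomputable def psi : OreLocalization S.op Rᵐᵒᵖ →+* Qᵐᵒᵖ :=
  universalHom (RingHom.op φ) (fSmap φ hunit) (fSmap_spec φ hunit)

theorem psi_apply (r : Rᵐᵒᵖ) (s : S.op) :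
    psi φ hunit (r /ₒ s) = (((fSmap φ hunit s)⁻¹ : Qᵐᵒᵖˣ) : Qᵐᵒᵖ) * op (φ (unop r)) :=
  universalHom_apply _ _ _

theorem psi_inj (hinj : Function.Injective φ) : Function.Injective (psi φ hunit) := by
  have h0 : ∀ c, psi φ hunit c = 0 → c = 0 := by
    intro c
    induction c using OreLocalization.ind with
    | _ r s =>
      intro hc
      rw [psi_apply] at hc
      have h1 : op (φ (unop r)) = (0 : Qᵐᵒᵖ) := by
        have h2 := congrArg (fun z => ((fSmap φ hunit s : Qᵐᵒᵖˣ) : Qᵐᵒᵖ) * z) hc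
        simpa [← mul_assoc] using h2
      have h3 : φ (unop r) = 0 := by
        have := congrArg unop h1
        simpa using this
      have h4 : unop r = 0 := hinj (by simpa using h3)
      have h5 : r = 0 := unop_injective h4
      rw [h5, zero_oreDiv']
  intro a b hab
  have := h0 (a - b) (by rw [map_sub, hab, sub_self])
  exact sub_eq_zero.mp this

theorem psi_surj (hfrac : ∀ q : Q, ∃ (r : R) (s : R), s ∈ S ∧ q * φ s = φ r) :
    Function.Surjective (psi φ hunit) := by
  intro x
  obtain ⟨r, s, hs, heq⟩ := hfrac (unop x)
  have hsop : op s ∈ S.op := Submonoid.mem_op.2 (by simpa using hs)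
  refine ⟨op r /ₒ ⟨op s, hsop⟩, ?_⟩
  rw [psi_apply, fSmap_inv_val]
  apply unop_injective
  simp only [unop_mul, unop_op]
  exact inv_cancel_right _ heq

end Loc

end Stmt2Aux

namespace Stmt2Aux
open OreLocalization

section Theta

variable {R Q : Type u} [Ring R] [Ring Q] {S : Submonoid R} (φ : R →+* Q) [Module Rᵐᵒᵖ Q]
variable [OreSet S.op]
variable (hunit : ∀ s ∈ S, IsUnit (φ s)) (hinj : Function.Injective φ)
variable (hfrac : ∀ q : Q, ∃ (r : R) (s : R), s ∈ S ∧ q * φ s = φ r)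

set_option linter.unusedSectionVars false

theorem eq_unit_inv {a v : Q} (h : IsUnit a) (hv : a * v = 1) : v = ↑h.unit⁻¹ := by
  calc v = 1 * v := (one_mul v).symm
    _ = ↑h.unit⁻¹ * (↑h.unit * v) := by rw [← mul_assoc, Units.inv_mul, one_mul]
    _ = ↑h.unit⁻¹ := by rw [h.unit_spec, hv, mul_one]

/-- The ring isomorphism `Rᵐᵒᵖ[S.op⁻¹] ≃+* Qᵐᵒᵖ`. -/
noncomputable def qeq : OreLocalization S.op Rᵐᵒᵖ ≃+* Qᵐᵒᵖ :=
  RingEquiv.ofBijective (psi φ hunit) ⟨psi_inj φ hunit hinj, psi_surj φ hunit hfrac⟩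

/-- The additive, anti-multiplicative map `Q → Rᵐᵒᵖ[S.op⁻¹]`. -/
noncomputable def theta (q : Q) : OreLocalization S.op Rᵐᵒᵖ :=
  (qeq φ hunit hinj hfrac).symm (op q)

theorem theta_add (a b : Q) :
    theta φ hunit hinj hfrac (a + b) = theta φ hunit hinj hfrac a + theta φ hunit hinj hfrac b := by
  unfold theta
  rw [← map_add]
  rfl

theorem theta_one : theta φ hunit hinj hfrac 1 = 1 := by
  unfold theta
  apply (qeq φ hunit hinj hfrac).injective
  rw [RingEquiv.apply_symm_apply, map_one, op_one]

theorem theta_mul (a b : Q) :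
    theta φ hunit hinj hfrac (a * b)
      = theta φ hunit hinj hfrac b * theta φ hunit hinj hfrac a := by
  unfold theta
  rw [← map_mul, op_mul]

theorem qeq_oreDiv (r : Rᵐᵒᵖ) (s : S.op) :
    qeq φ hunit hinj hfrac (r /ₒ s)
      = (((fSmap φ hunit s)⁻¹ : Qᵐᵒᵖˣ) : Qᵐᵒᵖ) * op (φ (unop r)) :=
  psi_apply φ hunit r s

theorem theta_phi (r : R) :
    theta φ hunit hinj hfrac (φ r) = (op r : Rᵐᵒᵖ) /ₒ (1 : S.op) := by
  unfold theta
  apply (qeq φ hunit hinj hfrac).injective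
  rw [RingEquiv.apply_symm_apply, qeq_oreDiv]
  rw [map_one, inv_one, Units.val_one, one_mul, unop_op]

theorem theta_inv (s : R) (hs : s ∈ S) (v : Q) (hv1 : φ s * v = 1) :
    theta φ hunit hinj hfrac v = (1 : Rᵐᵒᵖ) /ₒ (⟨op s, Submonoid.mem_op.2 (by simpa using hs)⟩ :
      S.op) := by
  unfold theta
  apply (qeq φ hunit hinj hfrac).injective
  rw [RingEquiv.apply_symm_apply, qeq_oreDiv, fSmap_inv_val]
  rw [show (unop (1:Rᵐᵒᵖ)) = (1:R) from rfl, map_one φ, op_one, mul_one]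
  apply unop_injective
  rw [unop_op, unop_op]
  exact eq_unit_inv _ hv1

end Theta

end Stmt2Aux

namespace Stmt2Aux
open OreLocalization

section Rho

variable {R Q : Type u} [Ring R] [Ring Q] {S : Submonoid R} (φ : R →+* Q) [Module Rᵐᵒᵖ Q]
variable [OreSet S.op]
variable {M : Type u} [AddCommGroup M] [Module Rᵐᵒᵖ M]

set_option linter.unusedSectionVars false

/-- The canonical map `M → M[S⁻¹]`. -/
def rho : M →ₗ[Rᵐᵒᵖ] OreLocalization S.op M where
  toFun x := x /ₒ 1
  map_add' x y := add_oreDiv.symm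
  map_smul' c x := by
    simp only [RingHom.id_apply]
    exact (smul_oreDiv_one c x).symm

variable (S M) in
theorem rho_apply (x : M) : (rho (S := S) (M := M) x) = x /ₒ 1 := rfl

theorem rho_inj (htf : ∀ s ∈ S, ∀ x : M, op s • x = 0 → x = 0) :
    Function.Injective (rho (S := S) (M := M)) := by
  intro x y hxy
  rw [rho_apply, rho_apply, oreDiv_eq_iff] at hxy
  obtain ⟨u, v, h1, h2⟩ := hxy
  rw [Submonoid.coe_one, mul_one, mul_one] at h2
  subst h2
  -- h1 : u • y = u • x  with u : S.op
  have h3 : ((u : Rᵐᵒᵖ) • (y - x) : M) = 0 := by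
    rw [smul_sub, show ((u : Rᵐᵒᵖ) • y : M) = (u : Rᵐᵒᵖ) • x from h1, sub_self]
  have h4 := htf (unop (u : Rᵐᵒᵖ)) (Submonoid.mem_op.1 u.2) (y - x) (by
    rw [op_unop]; exact h3)
  exact (sub_eq_zero.mp h4).symm

theorem div_eq_rho (htf : ∀ s ∈ S, ∀ x : M, op s • x = 0 → x = 0)
    (y m : M) (s : S.op) (h : y /ₒ s = rho (S := S) m) : y = (s : Rᵐᵒᵖ) • m := by
  have h' : rho (S := S) m = y /ₒ s := h.symm
  rw [rho_apply, oreDiv_eq_iff] at h'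
  obtain ⟨u, v, h1, h2⟩ := h'
  rw [Submonoid.coe_one, mul_one] at h2
  subst h2
  have h3 : (u : Rᵐᵒᵖ) • y = (u : Rᵐᵒᵖ) • ((s : Rᵐᵒᵖ) • m) := by
    rw [show ((u : Rᵐᵒᵖ) • y : M) = ((u : Rᵐᵒᵖ) * (s : Rᵐᵒᵖ)) • m from h1, mul_smul]
  have h4 : ((u : Rᵐᵒᵖ) • (y - (s : Rᵐᵒᵖ) • m) : M) = 0 := by
    rw [smul_sub, h3, sub_self]
  have h5 := htf (unop (u : Rᵐᵒᵖ)) (Submonoid.mem_op.1 u.2) _ (by rw [op_unop]; exact h4)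
  exact sub_eq_zero.mp h5

end Rho

end Stmt2Aux

namespace Stmt2Aux
open OreLocalization

section Pairing

variable {R Q : Type u} [Ring R] [Ring Q] {S : Submonoid R} (φ : R →+* Q) [Module Rᵐᵒᵖ Q]
variable [OreSet S.op]
variable (hsmul : ∀ (q : Q) (r : R), op r • q = q * φ r)
variable (hunit : ∀ s ∈ S, IsUnit (φ s)) (hinj : Function.Injective φ)
variable (hfrac : ∀ q : Q, ∃ (r : R) (s : R), s ∈ S ∧ q * φ s = φ r)
variable {M : Type u} [AddCommGroup M] [Module Rᵐᵒᵖ M]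

set_option linter.unusedSectionVars false

/-- `q ↦ θ(q) • (x /ₒ 1)`, as a right `R`-linear map `Q → M[S⁻¹]`. -/
noncomputable def gmap (x : M) : Q →ₗ[Rᵐᵒᵖ] OreLocalization S.op M where
  toFun q := theta φ hunit hinj hfrac q • rho (S := S) x
  map_add' a b := by rw [theta_add, add_smul]
  map_smul' c q := by
    simp only [RingHom.id_apply]
    rw [← op_unop c, hsmul, theta_mul, mul_smul, theta_phi, oreDiv_one_smul]

theorem gmap_apply (x : M) (q : Q) :
    gmap φ hsmul hunit hinj hfrac x q = theta φ hunit hinj hfrac q • rho (S := S) x := rfl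

variable (S M) in
/-- `W = M[S⁻¹]/M`. -/
abbrev wmod := OreLocalization S.op M ⧸ LinearMap.range (rho (S := S) (M := M))

theorem gmap_phi (x : M) (a : R) :
    gmap φ hsmul hunit hinj hfrac x (φ a) = rho (S := S) (op a • x) := by
  rw [gmap_apply, theta_phi, rho_apply, rho_apply, smul_div_one]

/-- The pairing `M × K → W`, as a linear map in the second variable. -/
noncomputable def bmap (x : M) : kmod R Q φ hsmul →ₗ[Rᵐᵒᵖ] wmod S M :=
  Submodule.liftQ (rsub R Q φ hsmul)
    ((LinearMap.range (rho (S := S) (M := M))).mkQ.comp (gmap φ hsmul hunit hinj hfrac x))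
    (by
      rintro _ ⟨a, rfl⟩
      rw [LinearMap.mem_ker, LinearMap.comp_apply, gmap_phi, Submodule.mkQ_apply,
        Submodule.Quotient.mk_eq_zero]
      exact ⟨op a • x, rfl⟩)

theorem bmap_mk (x : M) (q : Q) :
    bmap φ hsmul hunit hinj hfrac x (Submodule.Quotient.mk q)
      = Submodule.Quotient.mk (theta φ hunit hinj hfrac q • rho (S := S) x) := by
  rw [bmap, Submodule.liftQ_apply, LinearMap.comp_apply, gmap_apply, Submodule.mkQ_apply]

theorem bmap_add_left (x y : M) (k : kmod R Q φ hsmul) :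
    bmap φ hsmul hunit hinj hfrac (x + y) k
      = bmap φ hsmul hunit hinj hfrac x k + bmap φ hsmul hunit hinj hfrac y k := by
  obtain ⟨q, rfl⟩ := Submodule.Quotient.mk_surjective _ k
  rw [bmap_mk, bmap_mk, bmap_mk, map_add, smul_add, Submodule.Quotient.mk_add]

theorem bmap_bal (x : M) (r : R) (k : kmod R Q φ hsmul) :
    bmap φ hsmul hunit hinj hfrac (op r • x) k
      = bmap φ hsmul hunit hinj hfrac x (lmulK R Q φ hsmul r k) := by
  obtain ⟨q, rfl⟩ := Submodule.Quotient.mk_surjective _ k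
  rw [bmap_mk, lmulK_mk, bmap_mk]
  congr 1
  rw [map_smul, theta_mul, mul_smul, theta_phi, oreDiv_one_smul]

theorem core_inj (htf : ∀ s ∈ S, ∀ x : M, op s • x = 0 → x = 0)
    (hred : ∀ g : Q →ₗ[Rᵐᵒᵖ] M, g = 0) (x : M)
    (h : ∀ k : kmod R Q φ hsmul, bmap φ hsmul hunit hinj hfrac x k = 0) : x = 0 := by
  have hall : ∀ q : Q, ∃ m : M, rho (S := S) m = theta φ hunit hinj hfrac q • rho (S := S) x := by
    intro q
    have h1 := h (Submodule.Quotient.mk q)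
    rw [bmap_mk, Submodule.Quotient.mk_eq_zero] at h1
    exact h1
  have hspec : ∀ q : Q, rho (S := S) ((hall q).choose)
      = theta φ hunit hinj hfrac q • rho (S := S) x := fun q => (hall q).choose_spec
  set g : Q →ₗ[Rᵐᵒᵖ] M :=
    { toFun := fun q => (hall q).choose
      map_add' := by
        intro a b
        apply rho_inj htf
        rw [map_add, hspec, hspec, hspec, theta_add, add_smul]
      map_smul' := by
        intro c q
        simp only [RingHom.id_apply]
        apply rho_inj htf
        rw [map_smul, hspec, hspec, ← op_unop c, hsmul, theta_mul, mul_smul, theta_phi,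
          oreDiv_one_smul] } with hg
  have hz : g 1 = 0 := by rw [hred g]; rfl
  have h2 : rho (S := S) x = rho (S := S) (g 1) := by
    show _ = rho (S := S) ((hall 1).choose)
    rw [hspec, theta_one, one_smul]
  have h3 := rho_inj htf h2
  rw [hz] at h3
  exact h3

theorem core_div (htf : ∀ s ∈ S, ∀ x : M, op s • x = 0 → x = 0)
    (y : M) (s : R) (hs : s ∈ S) (v : Q) (hv1 : φ s * v = 1)
    (h : bmap φ hsmul hunit hinj hfrac y (Submodule.Quotient.mk v) = 0) :
    ∃ m : M, y = op s • m := by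
  rw [bmap_mk, Submodule.Quotient.mk_eq_zero, theta_inv φ hunit hinj hfrac s hs v hv1,
    rho_apply, OreLocalization.one_div_smul, one_mul] at h
  obtain ⟨m, hm⟩ := h
  exact ⟨m, div_eq_rho htf y m _ hm.symm⟩

end Pairing

end Stmt2Aux

namespace Stmt2Aux
open OreLocalization

section KTop

variable {R Q : Type u} [Ring R] [Ring Q] {S : Submonoid R} (φ : R →+* Q) [Module Rᵐᵒᵖ Q]
variable (hsmul : ∀ (q : Q) (r : R), op r • q = q * φ r)
variable {T : Type u} [AddCommGroup T] [Module Rᵐᵒᵖ T]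

set_option linter.unusedSectionVars false

/-- Every element of `K` is annihilated by some `s ∈ S`. -/
theorem ann_exists (hfrac : ∀ q : Q, ∃ (r : R) (s : R), s ∈ S ∧ q * φ s = φ r)
    (k : kmod R Q φ hsmul) : ∃ s ∈ S, op s • k = 0 := by
  obtain ⟨q, rfl⟩ := Submodule.Quotient.mk_surjective _ k
  obtain ⟨r, s, hs, heq⟩ := hfrac q
  refine ⟨s, hs, ?_⟩
  rw [mk_smul, heq]
  exact (mk_eq_zero_iff R Q φ hsmul _).2 ⟨r, rfl⟩

/-- A linear map in `U(s)` of `H` kills every element of `K` annihilated by `s`. -/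
theorem uhset_ann (hunit : ∀ s ∈ S, IsUnit (φ s)) (s : R) (hs : s ∈ S)
    (f' : kmod R Q φ hsmul →ₗ[Rᵐᵒᵖ] T) (hf' : f' ∈ uhset R Q φ hsmul T s)
    (k : kmod R Q φ hsmul) (hk : op s • k = 0) : f' k = 0 := by
  obtain ⟨q, rfl⟩ := Submodule.Quotient.mk_surjective _ k
  rw [mk_smul, Submodule.Quotient.mk_eq_zero] at hk
  obtain ⟨a, ha⟩ := hk
  set v : Q := ↑(hunit s hs).unit⁻¹ with hv
  have hv1 : φ s * v = 1 := (hunit s hs).mul_val_inv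
  have hqv : lmulK R Q φ hsmul a (Submodule.Quotient.mk v) = Submodule.Quotient.mk q := by
    rw [lmulK_mk, ha, mul_assoc, hv1, mul_one]
  obtain ⟨g, hg⟩ := hf' a
  have h2 := LinearMap.congr_fun hg (Submodule.Quotient.mk v)
  rw [LinearMap.comp_apply, LinearMap.comp_apply, hqv, lmulK_mk, hv1, mk_one_zero,
    map_zero] at h2
  exact h2

theorem lmulK_surj (hunit : ∀ s ∈ S, IsUnit (φ s)) (s : R) (hs : s ∈ S) :
    Function.Surjective (lmulK R Q φ hsmul s) := by
  intro k
  obtain ⟨q, rfl⟩ := Submodule.Quotient.mk_surjective _ k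
  set v : Q := ↑(hunit s hs).unit⁻¹ with hv
  have hv1 : φ s * v = 1 := (hunit s hs).mul_val_inv
  exact ⟨Submodule.Quotient.mk (v * q), by rw [lmulK_mk, ← mul_assoc, hv1, one_mul]⟩

/-- Factorization through `lmulK s` for maps vanishing on its kernel. -/
theorem factor_through (hunit : ∀ s ∈ S, IsUnit (φ s)) (s : R) (hs : s ∈ S)
    (F : kmod R Q φ hsmul →ₗ[Rᵐᵒᵖ] T)
    (hker : ∀ k, lmulK R Q φ hsmul s k = 0 → F k = 0) :
    ∃ g : kmod R Q φ hsmul →ₗ[Rᵐᵒᵖ] T, F = g.comp (lmulK R Q φ hsmul s) := by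
  set L := lmulK R Q φ hsmul s
  have hsurj : Function.Surjective L := lmulK_surj φ hsmul hunit s hs
  set e := LinearMap.quotKerEquivOfSurjective L hsurj
  have he : ∀ k, e (Submodule.Quotient.mk k) = L k := fun k => rfl
  refine ⟨(Submodule.liftQ (LinearMap.ker L) F (fun k hk => LinearMap.mem_ker.mpr (hker k (LinearMap.mem_ker.mp hk)))).comp
    e.symm.toLinearMap, ?_⟩
  apply LinearMap.ext
  intro k
  have hes : e.symm (L k) = Submodule.Quotient.mk k := by
    rw [← he k, LinearEquiv.symm_apply_apply]
  rw [LinearMap.comp_apply, LinearMap.comp_apply, LinearEquiv.coe_toLinearMap, hes,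
    Submodule.liftQ_apply]

end KTop

end Stmt2Aux

theorem stmt2 (R Q : Type u) [Ring R] [Ring Q] (S : Submonoid R) (φ : R →+* Q)
    [Module Rᵐᵒᵖ Q] (hsmul : ∀ (q : Q) (r : R), op r • q = q * φ r)
    (hsat : ∀ a b : R, a * b ∈ S → a ∈ S)
    (hOre : ∀ (r : R), ∀ s ∈ S, ∃ (r' s' : R), s' ∈ S ∧ r * s' = s * r')
    (hreg : ∀ s ∈ S, IsRegular s)
    (hdf : ∀ a b : Q, a * b = 1 → b * a = 1)
    (hinj : Function.Injective φ)
    (hunit : ∀ s ∈ S, IsUnit (φ s))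
    (hfrac : ∀ q : Q, ∃ (r : R) (s : R), s ∈ S ∧ q * φ s = φ r)
    (M T : Type u) [AddCommGroup M] [Module Rᵐᵒᵖ M] [AddCommGroup T] [Module Rᵐᵒᵖ T]
    -- `M` is torsion-free
    (htf : ∀ s ∈ S, ∀ x : M, op s • x = 0 → x = 0)
    -- `M` is h-reduced
    (hred : ∀ g : Q →ₗ[Rᵐᵒᵖ] M, g = 0)
    -- `T` is the tensor product `M ⊗_R K`
    (β : M → kmod R Q φ hsmul → T)
    (hβ1 : ∀ x y k, β (x + y) k = β x k + β y k)
    (hβ2 : ∀ x k k', β x (k + k') = β x k + β x k')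
    (hbal : ∀ (x : M) (r : R) (k : kmod R Q φ hsmul),
      β (op r • x) k = β x (lmulK R Q φ hsmul r k))
    (hlin : ∀ (x : M) (r : R) (k : kmod R Q φ hsmul), β x (op r • k) = op r • β x k)
    (huniv : ∀ (A : Type u) [AddCommGroup A] (b : M → kmod R Q φ hsmul → A),
      (∀ x y k, b (x + y) k = b x k + b y k) →
      (∀ x k k', b x (k + k') = b x k + b x k') →
      (∀ (x : M) (r : R) (k : kmod R Q φ hsmul),
        b (op r • x) k = b x (lmulK R Q φ hsmul r k)) →
      ∃! h : T →+ A, ∀ x k, h (β x k) = b x k) :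
    -- `λ` is injective
    Function.Injective (lam R Q φ hsmul M T β hβ2 hlin) ∧
    -- `λ` is a topological embedding: the preimage of a basic neighborhood of `0` of `H`
    -- is the corresponding basic neighborhood of `0` of `M`
    (∀ (n : ℕ) (sv : Fin n → R), (∀ i, sv i ∈ S) →
      (lam R Q φ hsmul M T β hβ2 hlin) ⁻¹' (⋂ i, uhset R Q φ hsmul T (sv i))
        = ⋂ i, umset R M (sv i)) ∧
    -- `H` is complete: every Cauchy net converges
    (∀ (ι : Type u) [Nonempty ι] [Preorder ι], (∀ a b : ι, ∃ c, a ≤ c ∧ b ≤ c) →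
      ∀ F : ι → (kmod R Q φ hsmul →ₗ[Rᵐᵒᵖ] T),
      (∀ (n : ℕ) (sv : Fin n → R), (∀ i, sv i ∈ S) →
        ∃ α : ι, ∀ b c : ι, α ≤ b → α ≤ c →
          F b - F c ∈ ⋂ i, uhset R Q φ hsmul T (sv i)) →
      ∃ f : kmod R Q φ hsmul →ₗ[Rᵐᵒᵖ] T,
        ∀ (n : ℕ) (sv : Fin n → R), (∀ i, sv i ∈ S) →
          ∃ α : ι, ∀ b : ι, α ≤ b → F b - f ∈ ⋂ i, uhset R Q φ hsmul T (sv i)) := by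
  letI : OreLocalization.OreSet S.op := Stmt2Aux.mkOreSet hOre hreg
  classical
  -- the comparison map `h : T →+ W = M[S⁻¹]/M`
  obtain ⟨h, hh, -⟩ := huniv (Stmt2Aux.wmod S M)
    (fun x k => Stmt2Aux.bmap φ hsmul hunit hinj hfrac x k)
    (fun x y k => Stmt2Aux.bmap_add_left φ hsmul hunit hinj hfrac x y k)
    (fun x k k' => map_add (Stmt2Aux.bmap φ hsmul hunit hinj hfrac x) k k')
    (fun x r k => Stmt2Aux.bmap_bal φ hsmul hunit hinj hfrac x r k)
  have hβ0 : ∀ (x : M) (k : kmod R Q φ hsmul),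
      β x k = 0 → Stmt2Aux.bmap φ hsmul hunit hinj hfrac x k = 0 := by
    intro x k hb
    rw [← hh x k, hb, map_zero]
  -- injectivity of `lam`
  have hinj1 : Function.Injective (lam R Q φ hsmul M T β hβ2 hlin) := by
    intro x y hxy
    have hsub : ∀ k, β (x - y) k = 0 := by
      intro k
      have h1 : β x k = β y k := DFunLike.congr_fun hxy k
      have h2 := hβ1 (x - y) y k
      rw [sub_add_cancel, h1] at h2
      exact by rw [eq_comm, ← sub_eq_zero] at h2; rw [← h2]; abel
    have h3 := Stmt2Aux.core_inj φ hsmul hunit hinj hfrac htf hred (x - y)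
      (fun k => hβ0 _ _ (hsub k))
    exact sub_eq_zero.mp h3
  -- the basic pointwise embedding equivalence
  have hemb : ∀ s, s ∈ S → ∀ x : M,
      (lam R Q φ hsmul M T β hβ2 hlin x ∈ uhset R Q φ hsmul T s ↔ x ∈ umset R M s) := by
    intro s hs x
    constructor
    · intro hx r
      obtain ⟨g, hg⟩ := hx r
      set v : Q := ↑(hunit s hs).unit⁻¹ with hv
      have hv1 : φ s * v = 1 := (hunit s hs).mul_val_inv
      have hRHS : lmulK R Q φ hsmul s (Submodule.Quotient.mk v) = 0 := by
        rw [Stmt2Aux.lmulK_mk, hv1, Stmt2Aux.mk_one_zero]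
      have h2 := LinearMap.congr_fun hg (Submodule.Quotient.mk v)
      rw [LinearMap.comp_apply, LinearMap.comp_apply, hRHS, map_zero] at h2
      have h3 : β (op r • x) (Submodule.Quotient.mk v) = 0 := by
        rw [hbal]
        exact h2
      exact Stmt2Aux.core_div φ hsmul hunit hinj hfrac htf (op r • x) s hs v hv1
        (hβ0 _ _ h3)
    · intro hx r
      obtain ⟨m, hm⟩ := hx r
      refine ⟨lam R Q φ hsmul M T β hβ2 hlin m, ?_⟩
      apply LinearMap.ext
      intro k
      show β x (lmulK R Q φ hsmul r k) = β m (lmulK R Q φ hsmul s k)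
      rw [← hbal, hm, hbal]
  have hpre : ∀ (n : ℕ) (sv : Fin n → R), (∀ i, sv i ∈ S) →
      (lam R Q φ hsmul M T β hβ2 hlin) ⁻¹' (⋂ i, uhset R Q φ hsmul T (sv i))
        = ⋂ i, umset R M (sv i) := by
    intro n sv hsv
    ext x
    simp only [Set.mem_preimage, Set.mem_iInter]
    exact ⟨fun hx i => (hemb (sv i) (hsv i) x).1 (hx i),
      fun hx i => (hemb (sv i) (hsv i) x).2 (hx i)⟩
  refine ⟨hinj1, hpre, ?_⟩
  -- completeness
  intro ι _ _ hdir F hC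
  have hCs : ∀ s, s ∈ S → ∃ α : ι, ∀ b c : ι, α ≤ b → α ≤ c →
      F b - F c ∈ uhset R Q φ hsmul T s := by
    intro s hs
    obtain ⟨α, hα⟩ := hC 1 (fun _ => s) (fun _ => hs)
    exact ⟨α, fun b c hb hc => Set.mem_iInter.1 (hα b c hb hc) 0⟩
  have hΦ : ∀ k : kmod R Q φ hsmul, ∃ (v : T) (s : R), s ∈ S ∧ op s • k = 0 ∧
      ∃ α : ι, ∀ b : ι, α ≤ b → F b k = v := by
    intro k
    obtain ⟨s, hs, hk⟩ := Stmt2Aux.ann_exists φ hsmul hfrac k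
    obtain ⟨α, hα⟩ := hCs s hs
    refine ⟨F α k, s, hs, hk, α, fun b hb => ?_⟩
    have h1 := Stmt2Aux.uhset_ann φ hsmul hunit s hs (F b - F α)
      (hα b α hb (le_refl α)) k hk
    rw [LinearMap.sub_apply, sub_eq_zero] at h1
    exact h1
  choose f₀ sA hsA hkA αA hαA using hΦ
  have hE : ∀ (k : kmod R Q φ hsmul) (s : R), s ∈ S → op s • k = 0 →
      ∀ α₁ : ι, (∀ b c : ι, α₁ ≤ b → α₁ ≤ c → F b - F c ∈ uhset R Q φ hsmul T s) →
      ∀ b : ι, α₁ ≤ b → F b k = f₀ k := by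
    intro k s hs hk α₁ hα₁ b hb
    obtain ⟨c, hc1, hc2⟩ := hdir α₁ (αA k)
    have h1 := Stmt2Aux.uhset_ann φ hsmul hunit s hs (F b - F c) (hα₁ b c hb hc1) k hk
    rw [LinearMap.sub_apply, sub_eq_zero] at h1
    rw [h1, hαA k c hc2]
  set f : kmod R Q φ hsmul →ₗ[Rᵐᵒᵖ] T :=
    { toFun := f₀
      map_add' := by
        intro k k'
        obtain ⟨r', s'', hs'', heq⟩ := hOre (sA k') (sA k) (hsA k)
        have ht : sA k' * s'' ∈ S := S.mul_mem (hsA k') hs''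
        have hk1 : op (sA k' * s'') • k = 0 := by
          rw [heq, op_mul, mul_smul, hkA k, smul_zero]
        have hk2 : op (sA k' * s'') • k' = 0 := by
          rw [op_mul, mul_smul, hkA k', smul_zero]
        have hk3 : op (sA k' * s'') • (k + k') = 0 := by
          rw [smul_add, hk1, hk2, add_zero]
        obtain ⟨α, hα⟩ := hCs _ ht
        have e1 := hE (k + k') _ ht hk3 α hα α (le_refl α)
        have e2 := hE k _ ht hk1 α hα α (le_refl α)
        have e3 := hE k' _ ht hk2 α hα α (le_refl α)
        rw [← e1, ← e2, ← e3, map_add]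
      map_smul' := by
        intro c k
        simp only [RingHom.id_apply]
        obtain ⟨r', t, htS, heq⟩ := hOre (unop c) (sA k) (hsA k)
        have hk1 : op t • (c • k) = 0 := by
          rw [smul_smul, show op t * c = op (unop c * t) by rw [op_mul, op_unop], heq,
            op_mul, mul_smul, hkA k, smul_zero]
        obtain ⟨α₁, hα₁⟩ := hCs t htS
        obtain ⟨α₂, hα₂⟩ := hCs (sA k) (hsA k)
        obtain ⟨c₀, hc₁, hc₂⟩ := hdir α₁ α₂
        have e1 := hE (c • k) t htS hk1 α₁ hα₁ c₀ hc₁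
        have e2 := hE k (sA k) (hsA k) (hkA k) α₂ hα₂ c₀ hc₂
        rw [← e1, ← e2, map_smul] } with hfdef
  refine ⟨f, ?_⟩
  intro n sv hsv
  obtain ⟨α, hα⟩ := hC n sv hsv
  refine ⟨α, fun b hb => ?_⟩
  rw [Set.mem_iInter]
  intro i
  intro r
  have hker : ∀ k, lmulK R Q φ hsmul (sv i) k = 0 →
      ((F b - f).comp (lmulK R Q φ hsmul r)) k = 0 := by
    intro k hk0
    obtain ⟨c, hc1, hc2⟩ := hdir α (αA (lmulK R Q φ hsmul r k))
    have hfc : f (lmulK R Q φ hsmul r k) = F c (lmulK R Q φ hsmul r k) :=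
      (hαA (lmulK R Q φ hsmul r k) c hc2).symm
    have hmem := Set.mem_iInter.1 (hα b c hb hc1) i
    obtain ⟨g, hg⟩ := hmem r
    have h2 := LinearMap.congr_fun hg k
    rw [LinearMap.comp_apply, LinearMap.comp_apply, hk0, map_zero] at h2
    rw [LinearMap.comp_apply, LinearMap.sub_apply, hfc, ← LinearMap.sub_apply]
    exact h2
  obtain ⟨g, hgeq⟩ := Stmt2Aux.factor_through φ hsmul hunit (sv i) (hsv i)
    ((F b - f).comp (lmulK R Q φ hsmul r)) hker
  exact ⟨g, hgeq⟩
end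

section
/- Let R be a topological ring having a basis B of neighborhoods of zero consisting of two-sided ideals, and suppose that R/I is a local ring for every proper ideal I ∈ B. Then the Hausdorff completion of R, i.e., the inverse limit lim←_{I∈B} R/I, is either the zero ring or a local ring. -/
/-!
STATEMENT 5: Let R be a topological ring having a basis B of neighborhoods of zero
consisting of two-sided ideals, and suppose that R/I is a local ring for every proper
ideal I ∈ B. Then the Hausdorff completion of R, i.e. the inverse limit lim←_{I∈B} R/I,
is either the zero ring or a local ring.

The basis `B` is a set of two-sided ideals of `R` which is a filter basis (nonempty and
downward directed); this is exactly the datum of a linear topology on `R` for which `B` is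
a basis of neighborhoods of `0`.  The quotient `R/I` is the quotient of `R` by the ring
congruence `I.ringCon`.  The inverse limit is realized as the subring of `∏_{I∈B} R/I`
consisting of the compatible families, compatibility being expressed (without choosing
factor maps) by: whenever `J ≤ I` are members of `B` and the `J`-component is the class of
`r ∈ R`, then the `I`-component is also the class of `r`.
-/

universe u

lemma factor_eq {R : Type u} [Ring R] {I J : TwoSidedIdeal R} (h : J ≤ I) {a b : R}
    (hab : (a : J.ringCon.Quotient) = (b : J.ringCon.Quotient)) :
    (a : I.ringCon.Quotient) = (b : I.ringCon.Quotient) := by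
  rw [RingCon.eq] at hab ⊢
  rw [TwoSidedIdeal.rel_iff] at hab ⊢
  exact h hab

/-- The inverse limit `lim←_{I ∈ B} R/I`, as a subring of the product `∏_{I ∈ B} R/I`. -/
def completionSubring (R : Type u) [Ring R] (B : Set (TwoSidedIdeal R)) :
    Subring (∀ I : B, (I : TwoSidedIdeal R).ringCon.Quotient) where
  carrier := {x | ∀ (I J : B), (J : TwoSidedIdeal R) ≤ I →
    ∀ r : R, x J = (r : (J : TwoSidedIdeal R).ringCon.Quotient) → x I = r}
  zero_mem' := by
    intro I J hJI r hr
    exact factor_eq hJI (hr : ((0 : R) : (J : TwoSidedIdeal R).ringCon.Quotient) = r)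
  one_mem' := by
    intro I J hJI r hr
    exact factor_eq hJI (hr : ((1 : R) : (J : TwoSidedIdeal R).ringCon.Quotient) = r)
  add_mem' := by
    intro x y hx hy I J hJI r hr
    obtain ⟨a, ha⟩ := Quotient.mk''_surjective (x J)
    have ha' : (a : (J : TwoSidedIdeal R).ringCon.Quotient) = x J := ha
    have h1 : (a : (J : TwoSidedIdeal R).ringCon.Quotient) + y J = r := by
      rw [ha']; exact hr
    have hyJ : y J = ((r - a : R) : (J : TwoSidedIdeal R).ringCon.Quotient) := by
      have := eq_sub_of_add_eq' h1
      exact this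
    have hxI := hx I J hJI a ha'.symm
    have hyI := hy I J hJI (r - a) hyJ
    show x I + y I = _
    rw [hxI, hyI]
    show ((a + (r - a) : R) : (I : TwoSidedIdeal R).ringCon.Quotient) = r
    rw [add_sub_cancel]
  neg_mem' := by
    intro x hx I J hJI r hr
    have h1 : -(x J) = (r : (J : TwoSidedIdeal R).ringCon.Quotient) := hr
    have hxJ : x J = ((-r : R) : (J : TwoSidedIdeal R).ringCon.Quotient) := by
      show x J = -(r : (J : TwoSidedIdeal R).ringCon.Quotient)
      exact neg_eq_iff_eq_neg.mp h1
    have hxI := hx I J hJI (-r) hxJ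
    show -(x I) = _
    rw [hxI]
    show -((-r : R) : (I : TwoSidedIdeal R).ringCon.Quotient) = r
    rw [show (((-r : R)) : (I : TwoSidedIdeal R).ringCon.Quotient)
      = -(r : (I : TwoSidedIdeal R).ringCon.Quotient) from rfl, neg_neg]
  mul_mem' := by
    intro x y hx hy I J hJI r hr
    obtain ⟨a, ha⟩ := Quotient.mk''_surjective (x J)
    obtain ⟨b, hb⟩ := Quotient.mk''_surjective (y J)
    have ha' : (a : (J : TwoSidedIdeal R).ringCon.Quotient) = x J := ha
    have hb' : (b : (J : TwoSidedIdeal R).ringCon.Quotient) = y J := hb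
    have hxI := hx I J hJI a ha'.symm
    have hyI := hy I J hJI b hb'.symm
    have hab : ((a * b : R) : (J : TwoSidedIdeal R).ringCon.Quotient) = r := by
      show (a : (J : TwoSidedIdeal R).ringCon.Quotient) * b = r
      rw [ha', hb']; exact hr
    have := factor_eq hJI hab
    show x I * y I = _
    rw [hxI, hyI]
    exact this

/-!
An element of the inverse limit is a unit as soon as each of its components is: the
componentwise inverses are again compatible, since the transition maps are ring
homomorphisms and inverses are unique. So if `a + b = 1` with neither `a` nor `b` a unit,
there are members `I`, `J` of `B` at which `a`, resp. `b`, is not a unit, and a common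
refinement `K ≤ I, J` in `B`. Non-units stay non-units when passing from `R/I` to `R/K`,
so `K` is proper, hence `R/K` is local, and one of `a`, `b` is a unit at `K`, hence at
`I` or `J`: a contradiction.
-/

namespace TwoSidedIdeal

variable {R : Type u} [Ring R]

def quotientFactor {I J : TwoSidedIdeal R} (h : J ≤ I) :
    J.ringCon.Quotient →+* I.ringCon.Quotient :=
  J.ringCon.lift I.ringCon.mk' fun _ _ hab => I.ringCon.eq.mpr (ringCon_le_iff.mp h hab)

@[simp]
lemma quotientFactor_coe {I J : TwoSidedIdeal R} (h : J ≤ I) (r : R) :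
    quotientFactor h (r : J.ringCon.Quotient) = r :=
  rfl

instance : Subsingleton (⊤ : TwoSidedIdeal R).ringCon.Quotient :=
  ⟨Quotient.ind₂ fun a b => Quotient.sound ((rel_iff _ a b).mpr (mem_top R))⟩

end TwoSidedIdeal

open TwoSidedIdeal

namespace completionSubring

variable {R : Type u} [Ring R] {B : Set (TwoSidedIdeal R)}

lemma mem_iff {x : ∀ I : B, (I : TwoSidedIdeal R).ringCon.Quotient} :
    x ∈ completionSubring R B ↔
      ∀ (I J : B) (h : (J : TwoSidedIdeal R) ≤ I), x I = quotientFactor h (x J) := by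
  refine ⟨fun hx I J h => ?_, fun hx I J h r hr => by rw [hx I J h, hr, quotientFactor_coe]⟩
  obtain ⟨r, hr⟩ := Quotient.mk''_surjective (x J)
  rw [← hr]
  exact hx I J h r hr.symm

lemma apply_eq_quotientFactor (x : completionSubring R B) {I J : B}
    (h : (J : TwoSidedIdeal R) ≤ I) : x.1 I = quotientFactor h (x.1 J) :=
  mem_iff.mp x.2 I J h

lemma isUnit_apply_of_le (x : completionSubring R B) {I J : B}
    (h : (J : TwoSidedIdeal R) ≤ I) (hx : IsUnit (x.1 J)) : IsUnit (x.1 I) :=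
  apply_eq_quotientFactor x h ▸ hx.map (quotientFactor h)

lemma isUnit_iff_forall_isUnit_apply (x : completionSubring R B) :
    IsUnit x ↔ ∀ I : B, IsUnit (x.1 I) := by
  refine ⟨fun hx I => (hx.map (completionSubring R B).subtype).map (Pi.evalRingHom _ I),
    fun hx => ?_⟩
  have hinv : (fun I => Ring.inverse (x.1 I)) ∈ completionSubring R B := by
    refine mem_iff.mpr fun I J h => left_inv_eq_right_inv (Ring.inverse_mul_cancel _ (hx I)) ?_
    rw [apply_eq_quotientFactor x h, ← map_mul, Ring.mul_inverse_cancel _ (hx J), map_one]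
  refine isUnit_iff_exists.mpr ⟨⟨_, hinv⟩, ?_, ?_⟩ <;> ext I
  exacts [Ring.mul_inverse_cancel _ (hx I), Ring.inverse_mul_cancel _ (hx I)]

lemma isLocalRing [Nontrivial (completionSubring R B)]
    (hdir : ∀ I ∈ B, ∀ J ∈ B, ∃ K ∈ B, K ≤ I ∧ K ≤ J)
    (hloc : ∀ I ∈ B, I ≠ ⊤ → IsLocalRing I.ringCon.Quotient) :
    IsLocalRing (completionSubring R B) := by
  refine ⟨fun {a b} hab => ?_⟩
  by_contra! hunits
  simp only [isUnit_iff_forall_isUnit_apply, not_forall] at hunits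
  obtain ⟨⟨I, hI⟩, ⟨J, hJ⟩⟩ := hunits
  obtain ⟨K, hKB, hKI, hKJ⟩ := hdir I I.2 J J.2
  have hK : K ≠ ⊤ := by
    rintro rfl
    exact hI (isUnit_apply_of_le a (J := ⟨⊤, hKB⟩) hKI (isUnit_of_subsingleton _))
  have := hloc K hKB hK
  have habK : a.1 ⟨K, hKB⟩ + b.1 ⟨K, hKB⟩ = 1 := congr_fun (congr_arg Subtype.val hab) _
  rcases IsLocalRing.isUnit_or_isUnit_of_add_one habK with ha | hb
  exacts [hI (isUnit_apply_of_le a hKI ha), hJ (isUnit_apply_of_le b hKJ hb)]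

end completionSubring

theorem stmt5_general (R : Type u) [Ring R] (B : Set (TwoSidedIdeal R))
    (hdir : ∀ I ∈ B, ∀ J ∈ B, ∃ K ∈ B, K ≤ I ∧ K ≤ J)
    (hloc : ∀ I ∈ B, I ≠ ⊤ → IsLocalRing I.ringCon.Quotient) :
    Subsingleton (completionSubring R B) ∨ IsLocalRing (completionSubring R B) := by
  refine or_iff_not_imp_left.mpr fun htriv => ?_
  have := not_subsingleton_iff_nontrivial.mp htriv
  exact completionSubring.isLocalRing hdir hloc

theorem stmt5 (R : Type u) [Ring R] (B : Set (TwoSidedIdeal R))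
    (hne : B.Nonempty)
    (hdir : ∀ I ∈ B, ∀ J ∈ B, ∃ K ∈ B, K ≤ I ∧ K ≤ J)
    (hloc : ∀ I ∈ B, I ≠ ⊤ → IsLocalRing I.ringCon.Quotient) :
    Subsingleton (completionSubring R B) ∨ IsLocalRing (completionSubring R B) :=
  stmt5_general R B hdir hloc
end

section
/- Let R ⊆ Q be rings such that the inclusion R → Q is an epimorphism in the category of rings and Q is flat as a left R-module. Let I be a two-sided ideal of R such that IQ = Q. If every left R/I-module, viewed as a left R-module, has a strongly flat cover as a left R-module, then R/I is left perfect, i.e., every left R/I-module has a projective cover (a surjection f : P → M with P a projective R/I-module and ker f superfluous in P). -/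
/-!
STATEMENT 9: Let R ⊆ Q be rings such that the inclusion R → Q is a ring epimorphism and
Q is flat as a left R-module. Let I be a two-sided ideal of R such that IQ = Q. If every
left R/I-module, viewed as a left R-module, has a strongly flat cover as a left R-module,
then R/I is left perfect: every left R/I-module has a projective cover.

The inclusion `R ⊆ Q` is formalized by an injective ring epimorphism `φ : R →+* Q`; `Q` is
a left `R`-module via `r • q = φ r * q` and flatness is the equational criterion.  The
condition `IQ = Q` says that `1` is a finite sum `∑ φ(aₖ) * qₖ` with `aₖ ∈ I`.  The
quotient ring `R/I` is `I.ringCon.Quotient`.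
-/

universe u

/-- The equational criterion for flatness of a left module over an arbitrary ring. -/
def IsFlatMod (R M : Type u) [Ring R] [AddCommGroup M] [Module R M] : Prop :=
  ∀ (n : ℕ) (r : Fin n → R) (x : Fin n → M), (∑ i, r i • x i) = 0 →
    ∃ (m : ℕ) (a : Fin n → Fin m → R) (y : Fin m → M),
      (∀ i, x i = ∑ j, a i j • y j) ∧ ∀ j, (∑ i, r i * a i j) = 0

/-- A left `R`-module `C` is Matlis-cotorsion if every short exact sequence
`0 → C → E → Q → 0` of left `R`-modules splits, i.e. `Ext¹_R(Q, C) = 0`. -/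
def MatlisCotorsion (R Q : Type u) [Ring R] [AddCommGroup Q] [Module R Q]
    (C : Type u) [AddCommGroup C] [Module R C] : Prop :=
  ∀ (E : Type u) [AddCommGroup E] [Module R E] (i : C →ₗ[R] E) (p : E →ₗ[R] Q),
    Function.Injective i → Function.Surjective p → Function.Exact i p →
      ∃ s : Q →ₗ[R] E, p.comp s = LinearMap.id

/-- A left `R`-module `M` is strongly flat if `Ext¹_R(M, C) = 0` for every
Matlis-cotorsion left `R`-module `C`. -/
def StronglyFlat (R Q : Type u) [Ring R] [AddCommGroup Q] [Module R Q]
    (M : Type u) [AddCommGroup M] [Module R M] : Prop :=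
  ∀ (C : Type u) [AddCommGroup C] [Module R C], MatlisCotorsion R Q C →
    ∀ (E : Type u) [AddCommGroup E] [Module R E] (i : C →ₗ[R] E) (p : E →ₗ[R] M),
      Function.Injective i → Function.Surjective p → Function.Exact i p →
        ∃ s : M →ₗ[R] E, p.comp s = LinearMap.id

/-- `f : S → M` is a strongly flat cover of `M`. -/
def IsStronglyFlatCover (R Q : Type u) [Ring R] [AddCommGroup Q] [Module R Q]
    {S M : Type u} [AddCommGroup S] [Module R S] [AddCommGroup M] [Module R M]
    (f : S →ₗ[R] M) : Prop :=
  StronglyFlat R Q S ∧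
  (∀ (S' : Type u) [AddCommGroup S'] [Module R S'], StronglyFlat R Q S' →
    ∀ g : S' →ₗ[R] M, ∃ h : S' →ₗ[R] S, f.comp h = g) ∧
  (∀ e : S →ₗ[R] S, f.comp e = f → Function.Bijective e)

namespace Stmt9Aux

variable {R : Type u} [Ring R]

/-- Descend a linear map along a surjection whose kernel it kills. -/
noncomputable def descend {W G E : Type u} [AddCommGroup W] [Module R W]
    [AddCommGroup G] [Module R G] [AddCommGroup E] [Module R E]
    (ρ : W →ₗ[R] G) (hρ : Function.Surjective ρ) (θ : W →ₗ[R] E)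
    (h : LinearMap.ker ρ ≤ LinearMap.ker θ) : G →ₗ[R] E :=
  ((LinearMap.ker ρ).liftQ θ h).comp (ρ.quotKerEquivOfSurjective hρ).symm.toLinearMap

lemma descend_apply {W G E : Type u} [AddCommGroup W] [Module R W]
    [AddCommGroup G] [Module R G] [AddCommGroup E] [Module R E]
    (ρ : W →ₗ[R] G) (hρ : Function.Surjective ρ) (θ : W →ₗ[R] E)
    (h : LinearMap.ker ρ ≤ LinearMap.ker θ) (w : W) :
    descend ρ hρ θ h (ρ w) = θ w := by
  have h1 : (ρ.quotKerEquivOfSurjective hρ).symm (ρ w) = Submodule.Quotient.mk w := by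
    apply (ρ.quotKerEquivOfSurjective hρ).injective
    simp only [LinearEquiv.apply_symm_apply]
    rfl
  simp only [descend, LinearMap.comp_apply, LinearEquiv.coe_coe, h1]
  rfl

/-- Splitting from a submodule on which the projection is bijective. -/
lemma section_of_bijOn {E G : Type u} [AddCommGroup E] [Module R E]
    [AddCommGroup G] [Module R G] (p : E →ₗ[R] G) (E₀ : Submodule R E)
    (hbij : Function.Bijective (p.comp E₀.subtype)) :
    ∃ s : G →ₗ[R] E, p.comp s = LinearMap.id := by
  let e := LinearEquiv.ofBijective (p.comp E₀.subtype) hbij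
  refine ⟨E₀.subtype.comp e.symm.toLinearMap, ?_⟩
  ext g
  show p (E₀.subtype (e.symm g)) = g
  exact e.apply_symm_apply g

/-- A retraction of the injection yields a section of the surjection. -/
lemma section_of_retraction {C E G : Type u} [AddCommGroup C] [Module R C]
    [AddCommGroup E] [Module R E] [AddCommGroup G] [Module R G]
    (j : C →ₗ[R] E) (p : E →ₗ[R] G) (hp : Function.Surjective p)
    (hex : Function.Exact j p) (r : E →ₗ[R] C) (hr : r.comp j = LinearMap.id) :
    ∃ s : G →ₗ[R] E, p.comp s = LinearMap.id := by
  set θ : E →ₗ[R] E := LinearMap.id - j.comp r with hθ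
  have hker : LinearMap.ker p ≤ LinearMap.ker θ := by
    intro x hx
    obtain ⟨c, rfl⟩ := (hex x).mp hx
    have : r (j c) = c := congrArg (· c) (congrArg DFunLike.coe hr)
    simp [θ, LinearMap.mem_ker, this]
  refine ⟨descend p hp θ hker, ?_⟩
  ext g
  obtain ⟨x, rfl⟩ := hp g
  simp only [LinearMap.comp_apply, LinearMap.id_apply, descend_apply]
  simp [θ, hex.apply_apply_eq_zero]

end Stmt9Aux

namespace Stmt9Aux

section Ideal
variable {R : Type u} [Ring R] (I : TwoSidedIdeal R)

/-- The submodule `I•E` of finite sums `∑ aₖ • eₖ` with `aₖ ∈ I`. -/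
def smulSub (E : Type u) [AddCommGroup E] [Module R E] : Submodule R E where
  carrier := {x | ∃ (n : ℕ) (a : Fin n → R) (e : Fin n → E),
    (∀ k, a k ∈ I) ∧ x = ∑ k, a k • e k}
  zero_mem' := ⟨0, Fin.elim0, Fin.elim0, fun k => k.elim0, by simp⟩
  add_mem' := by
    rintro x y ⟨n, a, e, ha, rfl⟩ ⟨m, b, u, hb, rfl⟩
    refine ⟨n + m, Fin.append a b, Fin.append e u, ?_, ?_⟩
    · intro k
      refine Fin.addCases (fun i => ?_) (fun i => ?_) k
      · simpa [Fin.append_left] using ha i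
      · simpa [Fin.append_right] using hb i
    · rw [Fin.sum_univ_add]
      simp [Fin.append_left, Fin.append_right]
  smul_mem' := by
    rintro c x ⟨n, a, e, ha, rfl⟩
    exact ⟨n, fun k => c * a k, e, fun k => I.mul_mem_left _ _ (ha k),
      by rw [Finset.smul_sum]; simp [smul_smul]⟩

lemma smul_mem_smulSub {E : Type u} [AddCommGroup E] [Module R E]
    {a : R} (ha : a ∈ I) (e : E) : a • e ∈ smulSub I E :=
  ⟨1, fun _ => a, fun _ => e, fun _ => ha, by simp⟩

end Ideal

section Main
variable {R Q : Type u} [Ring R] [Ring Q] (φ : R →+* Q) [Module R Q]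
  (I : TwoSidedIdeal R)

/-- Any linear map from `Q` to an `I`-killed module vanishes. -/
lemma hom_eq_zero
    (hsmul : ∀ (r : R) (q : Q), r • q = φ r * q)
    (hIQ : ∃ (n : ℕ) (a : Fin n → R) (q : Fin n → Q),
      (∀ k, a k ∈ I) ∧ (∑ k, φ (a k) * q k) = 1)
    {C : Type u} [AddCommGroup C] [Module R C]
    (hC : ∀ a ∈ I, ∀ c : C, a • c = 0) (g : Q →ₗ[R] C) (q : Q) : g q = 0 := by
  obtain ⟨n, a, w, ha, h1⟩ := hIQ
  have hq : q = ∑ k, a k • (w k * q) := by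
    have : ∑ k, a k • (w k * q) = (∑ k, φ (a k) * w k) * q := by
      rw [Finset.sum_mul]
      exact Finset.sum_congr rfl fun k _ => by rw [hsmul, mul_assoc]
    rw [this, h1, one_mul]
  rw [hq, map_sum]
  refine Finset.sum_eq_zero fun k _ => ?_
  rw [map_smul, hC _ (ha k)]

/-- Every module killed by `I` is Matlis-cotorsion. -/
lemma mc_of_killed
    (hsmul : ∀ (r : R) (q : Q), r • q = φ r * q)
    (hflat : IsFlatMod R Q)
    (hIQ : ∃ (n : ℕ) (a : Fin n → R) (q : Fin n → Q),
      (∀ k, a k ∈ I) ∧ (∑ k, φ (a k) * q k) = 1)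
    (C : Type u) [AddCommGroup C] [Module R C]
    (hC : ∀ a ∈ I, ∀ c : C, a • c = 0) : MatlisCotorsion R Q C := by
  intro E _ _ i p hi hp hex
  set E₀ := smulSub I E with hE₀
  -- the restriction of p to E₀ kills nothing
  have hker : ∀ x ∈ E₀, p x = 0 → x = 0 := by
    rintro x ⟨n, a, e, ha, rfl⟩ hx
    have hpx : ∑ k, a k • p (e k) = 0 := by
      rw [← hx, map_sum]; exact Finset.sum_congr rfl fun k _ => (map_smul p _ _).symm
    obtain ⟨m, b, y, hxy, hb⟩ := hflat n a (fun k => p (e k)) hpx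
    choose u hu using fun j => hp (y j)
    have hc : ∀ k, p (e k - ∑ j, b k j • u j) = 0 := by
      intro k
      rw [map_sub, map_sum]
      rw [hxy k]
      rw [sub_eq_zero]
      exact Finset.sum_congr rfl fun j _ => by rw [map_smul, hu]
    choose d hd using fun k => (hex (e k - ∑ j, b k j • u j)).mp (hc k)
    have he : ∀ k, e k = i (d k) + ∑ j, b k j • u j := by
      intro k; rw [hd]; abel
    calc ∑ k, a k • e k = ∑ k, (a k • i (d k) + ∑ j, (a k * b k j) • u j) := by
          refine Finset.sum_congr rfl fun k _ => ?_
          rw [he k, smul_add, Finset.smul_sum]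
          simp [smul_smul]
      _ = ∑ k, a k • i (d k) + ∑ j, (∑ k, a k * b k j) • u j := by
          rw [Finset.sum_add_distrib, Finset.sum_comm]
          congr 1
          exact Finset.sum_congr rfl fun j _ => by rw [Finset.sum_smul]
      _ = 0 := by
          rw [Finset.sum_eq_zero fun k _ => by rw [← map_smul, hC _ (ha k), map_zero],
            Finset.sum_eq_zero fun j _ => by rw [hb j, zero_smul], add_zero]
  have hbij : Function.Bijective (p.comp E₀.subtype) := by
    constructor
    · intro x y hxy
      have : p ((x : E) - y) = 0 := by
        simp only [map_sub]
        simpa [sub_eq_zero] using hxy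
      have hx0 := hker _ (E₀.sub_mem x.2 y.2) this
      exact Subtype.ext (by rw [sub_eq_zero] at hx0; exact hx0)
    · intro q
      obtain ⟨n, a, w, ha, h1⟩ := hIQ
      choose e he using fun k => hp (w k * q)
      refine ⟨⟨∑ k, a k • e k, ⟨n, a, e, ha, rfl⟩⟩, ?_⟩
      show p (∑ k, a k • e k) = q
      rw [map_sum]
      have : ∑ k, p (a k • e k) = ∑ k, φ (a k) * (w k * q) := by
        refine Finset.sum_congr rfl fun k _ => ?_
        rw [map_smul, he, hsmul]
      rw [this]
      calc ∑ k, φ (a k) * (w k * q) = (∑ k, φ (a k) * w k) * q := by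
            rw [Finset.sum_mul]; exact Finset.sum_congr rfl fun k _ => (mul_assoc _ _ _).symm
        _ = q := by rw [h1, one_mul]
  exact section_of_bijOn p E₀ hbij

end Main

end Stmt9Aux

namespace Stmt9Aux

section SF
variable {R Q : Type u} [Ring R] [Ring Q] [Module R Q]

/-- Free modules are strongly flat. -/
lemma sf_free (X : Type u) : StronglyFlat R Q (X →₀ R) := by
  intro C _ _ _hC E _ _ i p hi hp hex
  choose e he using fun x : X => hp (Finsupp.single x 1)
  refine ⟨Finsupp.linearCombination R e, ?_⟩
  refine Finsupp.lhom_ext fun x r => ?_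
  simp only [LinearMap.comp_apply, LinearMap.id_apply, Finsupp.linearCombination_single,
    map_smul, he, Finsupp.smul_single, smul_eq_mul, mul_one]

/-- `Q` itself is strongly flat (by definition of Matlis-cotorsion). -/
lemma sf_Q : StronglyFlat R Q Q := by
  intro C _ _ hC E _ _ i p hi hp hex
  exact hC E i p hi hp hex

/-- Strongly flat modules are closed under extensions. -/
lemma sf_ext {A G B : Type u} [AddCommGroup A] [Module R A] [AddCommGroup G] [Module R G]
    [AddCommGroup B] [Module R B]
    (hA : StronglyFlat R Q A) (hB : StronglyFlat R Q B)
    (α : A →ₗ[R] G) (β : G →ₗ[R] B) (hα : Function.Injective α)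
    (hβ : Function.Surjective β) (hex : Function.Exact α β) :
    StronglyFlat R Q G := by
  intro C _ _ hC E _ _ i p hi hp hexE
  classical
  -- Step 1 : pull back `p` along `α` and split using strong flatness of `A`.
  set X₁ : Submodule R (E × A) :=
    LinearMap.ker ((p.comp (LinearMap.fst R E A)) - (α.comp (LinearMap.snd R E A))) with hX₁
  have memX₁ : ∀ z : E × A, z ∈ X₁ ↔ p z.1 = α z.2 := by
    intro z
    simp [hX₁, LinearMap.mem_ker, sub_eq_zero]
  set π₂ : X₁ →ₗ[R] A := (LinearMap.snd R E A).comp X₁.subtype with hπ₂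
  have hi₁mem : ∀ c : C, ((i c, 0) : E × A) ∈ X₁ := by
    intro c
    rw [memX₁]
    simp [hexE.apply_apply_eq_zero]
  set i₁ : C →ₗ[R] X₁ :=
    LinearMap.codRestrict X₁ ((LinearMap.inl R E A).comp i) hi₁mem with hi₁
  have hi₁inj : Function.Injective i₁ := by
    intro c c' hcc
    have : ((i c, 0) : E × A) = (i c', 0) := congrArg Subtype.val hcc
    exact hi (congrArg Prod.fst this)
  have hπ₂surj : Function.Surjective π₂ := by
    intro a
    obtain ⟨e, he⟩ := hp (α a)
    exact ⟨⟨(e, a), (memX₁ _).mpr he⟩, rfl⟩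
  have hex₁ : Function.Exact i₁ π₂ := by
    intro z
    constructor
    · intro hz
      have hz2 : z.1.2 = 0 := hz
      have : p z.1.1 = 0 := by
        rw [(memX₁ z.1).mp z.2, hz2, map_zero]
      obtain ⟨c, hc⟩ := (hexE z.1.1).mp this
      refine ⟨c, ?_⟩
      apply Subtype.ext
      show ((i c, 0) : E × A) = z.1
      rw [hc, ← hz2]
    · rintro ⟨c, rfl⟩
      rfl
  obtain ⟨σ₁, hσ₁⟩ := hA C hC X₁ i₁ π₂ hi₁inj hπ₂surj hex₁
  set t₁ : A →ₗ[R] E := (LinearMap.fst R E A).comp (X₁.subtype.comp σ₁) with ht₁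
  have hpt₁ : ∀ a, p (t₁ a) = α a := by
    intro a
    have h2 : ((σ₁ a : E × A)).2 = a := congrArg (· a) (congrArg DFunLike.coe hσ₁)
    have := (memX₁ (σ₁ a : E × A)).mp (σ₁ a).2
    rw [h2] at this
    exact this
  -- Step 2 : quotient by `t₁(A)` and split using strong flatness of `B`.
  set T : Submodule R E := LinearMap.range t₁ with hT
  set p₂ : (E ⧸ T) →ₗ[R] B := Submodule.liftQ T (β.comp p) (by
    rintro x ⟨a, rfl⟩
    simp [LinearMap.mem_ker, hpt₁, hex.apply_apply_eq_zero]) with hp₂def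
  set i₂ : C →ₗ[R] (E ⧸ T) := T.mkQ.comp i with hi₂def
  have hi₂inj : Function.Injective i₂ := by
    intro c c' hcc
    have h0 : i (c - c') ∈ T := by
      rw [map_sub]
      rw [← Submodule.Quotient.eq]
      exact hcc
    obtain ⟨a, hawit⟩ := h0
    have hpa : α a = 0 := by
      rw [← hpt₁, hawit]
      have := hexE.apply_apply_eq_zero (c - c')
      simpa using this
    have ha0 : a = 0 := hα (by rw [hpa, map_zero])
    have : i (c - c') = 0 := by rw [← hawit, ha0, map_zero]
    have := hi (by rw [this, map_zero] : i (c - c') = i 0)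
    rwa [sub_eq_zero] at this
  have hp₂surj : Function.Surjective p₂ := by
    intro b
    obtain ⟨g, rfl⟩ := hβ b
    obtain ⟨e, rfl⟩ := hp g
    exact ⟨T.mkQ e, rfl⟩
  have hex₂ : Function.Exact i₂ p₂ := by
    intro x
    obtain ⟨e, rfl⟩ := T.mkQ_surjective x
    constructor
    · intro hx
      have : β (p e) = 0 := hx
      obtain ⟨a, ha⟩ := (hex (p e)).mp this
      have : p (e - t₁ a) = 0 := by rw [map_sub, hpt₁, ha, sub_self]
      obtain ⟨c, hc⟩ := (hexE _).mp this
      refine ⟨c, ?_⟩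
      show Submodule.Quotient.mk (i c) = Submodule.Quotient.mk e
      rw [Submodule.Quotient.eq]
      rw [hc]
      exact ⟨-a, by simp⟩
    · rintro ⟨c, hc⟩
      rw [← hc]
      show β (p (i c)) = 0
      rw [hexE.apply_apply_eq_zero, map_zero]
  obtain ⟨σ₂, hσ₂⟩ := hB C hC (E ⧸ T) i₂ p₂ hi₂inj hp₂surj hex₂
  -- Step 3 : build the section of `p`.
  set W : Submodule R (E × G) :=
    LinearMap.ker ((T.mkQ.comp (LinearMap.fst R E G)) -
      ((σ₂.comp β).comp (LinearMap.snd R E G))) with hW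
  have memW : ∀ z : E × G, z ∈ W ↔ T.mkQ z.1 = σ₂ (β z.2) := by
    intro z
    simp [hW, LinearMap.mem_ker, sub_eq_zero]
  set ρ : W →ₗ[R] G := (LinearMap.snd R E G).comp W.subtype with hρdef
  have hρsurj : Function.Surjective ρ := by
    intro g
    obtain ⟨e, he⟩ := T.mkQ_surjective (σ₂ (β g))
    exact ⟨⟨(e, g), (memW _).mpr he⟩, rfl⟩
  have hδmem : ∀ w : W, p (w : E × G).1 - (w : E × G).2 ∈ LinearMap.range α := by
    intro w
    have h1 : β (p (w : E × G).1) = p₂ (T.mkQ (w : E × G).1) := rfl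
    have h2 : T.mkQ (w : E × G).1 = σ₂ (β (w : E × G).2) := (memW _).mp w.2
    have h3 : β (p (w : E × G).1) = β (w : E × G).2 := by
      rw [h1, h2]
      exact congrArg (· (β (w : E × G).2)) (congrArg DFunLike.coe hσ₂)
    have : β (p (w : E × G).1 - (w : E × G).2) = 0 := by rw [map_sub, h3, sub_self]
    exact (hex _).mp this
  set αe : A ≃ₗ[R] LinearMap.range α := LinearEquiv.ofInjective α hα with hαe
  set δ0 : W →ₗ[R] G :=
    (p.comp ((LinearMap.fst R E G).comp W.subtype)) - ((LinearMap.snd R E G).comp W.subtype)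
    with hδ0
  set δ : W →ₗ[R] A :=
    αe.symm.toLinearMap.comp (LinearMap.codRestrict (LinearMap.range α) δ0 (fun w => hδmem w))
    with hδ
  have hαδ : ∀ w : W, α (δ w) = p (w : E × G).1 - (w : E × G).2 := by
    intro w
    have : (αe (δ w) : G) = (⟨δ0 w, hδmem w⟩ : LinearMap.range α) := by
      rw [hδ]
      simp only [LinearMap.comp_apply, LinearEquiv.coe_coe]
      rw [LinearEquiv.apply_symm_apply]
      rfl
    have h4 : (αe (δ w) : G) = α (δ w) := rfl
    rw [← h4, this]
    rfl
  set θ : W →ₗ[R] E := ((LinearMap.fst R E G).comp W.subtype) - t₁.comp δ with hθ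
  have hkerθ : LinearMap.ker ρ ≤ LinearMap.ker θ := by
    intro w hw
    have hw2 : (w : E × G).2 = 0 := hw
    have hmk : T.mkQ (w : E × G).1 = 0 := by
      rw [(memW _).mp w.2, hw2, map_zero, map_zero]
    have hmem : (w : E × G).1 ∈ T := (Submodule.Quotient.mk_eq_zero T).mp hmk
    obtain ⟨a, ha⟩ := hmem
    have hδw : α (δ w) = α a := by
      rw [hαδ, hw2, sub_zero, ← ha, hpt₁]
    have : δ w = a := hα hδw
    show ((LinearMap.fst R E G).comp W.subtype) w - t₁ (δ w) = 0
    rw [this, ha]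
    simp
  refine ⟨descend ρ hρsurj θ hkerθ, ?_⟩
  ext g
  obtain ⟨w, rfl⟩ := hρsurj g
  simp only [LinearMap.comp_apply, LinearMap.id_apply, descend_apply]
  show p (((LinearMap.fst R E G) (W.subtype w)) - t₁ (δ w)) = ρ w
  rw [map_sub, hpt₁, hαδ]
  show p (w : E × G).1 - (p (w : E × G).1 - (w : E × G).2) = (w : E × G).2
  abel

end SF

end Stmt9Aux

namespace Stmt9Aux

section Wak
variable {R Q : Type u} [Ring R] [Ring Q] [Module R Q]

/-- The kernel of a strongly flat cover is Matlis-cotorsion (Wakamatsu's lemma). -/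
lemma ker_cover_mc {S M : Type u} [AddCommGroup S] [Module R S] [AddCommGroup M] [Module R M]
    (f : S →ₗ[R] M) (hcov : IsStronglyFlatCover R Q f) :
    MatlisCotorsion R Q ↥(LinearMap.ker f) := by
  intro E _ _ j p hj hp hex
  set κ : ↥(LinearMap.ker f) →ₗ[R] S := (LinearMap.ker f).subtype with hκ
  set D : Submodule R (S × E) := LinearMap.range (κ.prod (-j)) with hD
  set γS : S →ₗ[R] ((S × E) ⧸ D) := D.mkQ.comp (LinearMap.inl R S E) with hγS
  set γE : E →ₗ[R] ((S × E) ⧸ D) := D.mkQ.comp (LinearMap.inr R S E) with hγE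
  have hrel : ∀ k : ↥(LinearMap.ker f), γE (j k) = γS (k : S) := by
    intro k
    show Submodule.Quotient.mk ((0 : S), j k) = Submodule.Quotient.mk ((k : S), (0 : E))
    rw [Submodule.Quotient.eq]
    exact ⟨-k, by simp [hκ]⟩
  have hpj : ∀ c, p (j c) = 0 := hex.apply_apply_eq_zero
  set βG : ((S × E) ⧸ D) →ₗ[R] Q := D.liftQ (p.comp (LinearMap.snd R S E)) (by
    rintro z ⟨k, rfl⟩
    simp [LinearMap.mem_ker, hpj]) with hβG
  have hγSinj : Function.Injective γS := by
    intro s s' hss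
    have hmem : ((s, (0:E)) - (s', (0:E))) ∈ D := by
      rw [← Submodule.Quotient.eq]
      exact hss
    obtain ⟨k, hk⟩ := hmem
    have hk2 : j k = 0 := by
      have := congrArg Prod.snd hk
      simpa [neg_eq_zero] using this
    have hk0 : k = 0 := hj (by rw [hk2, map_zero])
    have hk1 : κ k = s - s' := by
      have := congrArg Prod.fst hk
      simpa using this
    rw [hk0, map_zero] at hk1
    rw [← sub_eq_zero, ← hk1]
  have hβGsurj : Function.Surjective βG := by
    intro q
    obtain ⟨e, rfl⟩ := hp q
    exact ⟨γE e, rfl⟩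
  have hexG : Function.Exact γS βG := by
    intro x
    obtain ⟨z, rfl⟩ := D.mkQ_surjective x
    constructor
    · intro hx
      have hx' : p z.2 = 0 := hx
      obtain ⟨k, hk⟩ := (hex z.2).mp hx'
      refine ⟨z.1 + κ k, ?_⟩
      show Submodule.Quotient.mk (z.1 + κ k, (0 : E)) = Submodule.Quotient.mk z
      rw [Submodule.Quotient.eq]
      refine ⟨k, ?_⟩
      have : (z.1 + κ k, (0 : E)) - z = (κ k, -z.2) := by
        ext <;> simp
      rw [this]
      ext
      · show κ k = κ k
        rfl
      · show -(j k) = -z.2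
        rw [hk]
    · rintro ⟨s, hs⟩
      rw [← hs]
      show p (0 : E) = 0
      exact map_zero p
  have hGSF : StronglyFlat R Q ((S × E) ⧸ D) := sf_ext hcov.1 sf_Q γS βG hγSinj hβGsurj hexG
  set φG : ((S × E) ⧸ D) →ₗ[R] M := D.liftQ (f.comp (LinearMap.fst R S E)) (by
    rintro z ⟨k, rfl⟩
    simp only [LinearMap.mem_ker, LinearMap.comp_apply, LinearMap.prod_apply, Pi.prod,
      LinearMap.fst_apply]
    exact k.2) with hφG
  obtain ⟨h, hh⟩ := hcov.2.1 _ hGSF φG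
  set e₀ : S →ₗ[R] S := h.comp γS with he₀
  have hfe₀ : f.comp e₀ = f := by
    ext s
    show f (h (γS s)) = f s
    have : f (h (γS s)) = φG (γS s) := congrArg (· (γS s)) (congrArg DFunLike.coe hh)
    rw [this]
    rfl
  have hbij := hcov.2.2 e₀ hfe₀
  set ψ : E →ₗ[R] S := h.comp γE with hψ
  have hψker : ∀ e, ψ e ∈ LinearMap.ker f := by
    intro e
    have : f (h (γE e)) = φG (γE e) := congrArg (· (γE e)) (congrArg DFunLike.coe hh)
    show f (h (γE e)) = 0
    rw [this]
    show f 0 = 0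
    exact map_zero f
  set ψ' : E →ₗ[R] ↥(LinearMap.ker f) := LinearMap.codRestrict (LinearMap.ker f) ψ hψker with hψ'
  have he₀K : ∀ x ∈ LinearMap.ker f, e₀ x ∈ LinearMap.ker f := by
    intro x hx
    show f (e₀ x) = 0
    have : f (e₀ x) = f x := congrArg (· x) (congrArg DFunLike.coe hfe₀)
    rw [this]
    exact hx
  set eK : ↥(LinearMap.ker f) →ₗ[R] ↥(LinearMap.ker f) := e₀.restrict he₀K with heKdef
  have heKdefbij : Function.Bijective eK := by
    constructor
    · intro k k' hkk
      exact Subtype.ext (hbij.1 (congrArg Subtype.val hkk))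
    · intro k
      obtain ⟨s, hs⟩ := hbij.2 (k : S)
      have hsK : s ∈ LinearMap.ker f := by
        show f s = 0
        have : f (e₀ s) = f s := congrArg (· s) (congrArg DFunLike.coe hfe₀)
        rw [← this, hs]
        exact k.2
      exact ⟨⟨s, hsK⟩, Subtype.ext hs⟩
  set eE := LinearEquiv.ofBijective eK heKdefbij with heE
  set r : E →ₗ[R] ↥(LinearMap.ker f) := eE.symm.toLinearMap.comp ψ' with hr
  have hrj : r.comp j = LinearMap.id := by
    refine LinearMap.ext fun k => ?_
    show eE.symm (ψ' (j k)) = k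
    apply eE.injective
    rw [LinearEquiv.apply_symm_apply]
    apply Subtype.ext
    show ψ (j k) = e₀ (k : S)
    show h (γE (j k)) = h (γS (k : S))
    rw [hrel]
  exact section_of_retraction j p hp hex r hrj

end Wak

end Stmt9Aux

namespace Stmt9Aux

section Sub
variable {R Q : Type u} [Ring R] [Ring Q] [Module R Q]

lemma mc_of_sub (φ : R →+* Q) (I : TwoSidedIdeal R)
    (hsmul : ∀ (r : R) (q : Q), r • q = φ r * q)
    (hIQ : ∃ (n : ℕ) (a : Fin n → R) (q : Fin n → Q),
      (∀ k, a k ∈ I) ∧ (∑ k, φ (a k) * q k) = 1)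
    {C K : Type u} [AddCommGroup C] [Module R C] [AddCommGroup K] [Module R K]
    (ι : C →ₗ[R] K) (hι : Function.Injective ι) (hK : MatlisCotorsion R Q K)
    (hT : ∀ a ∈ I, ∀ k : K, a • k ∈ LinearMap.range ι) :
    MatlisCotorsion R Q C := by
  intro E _ _ i p hi hp hex
  set D : Submodule R (K × E) := LinearMap.range (ι.prod (-i)) with hD
  set γK : K →ₗ[R] ((K × E) ⧸ D) := D.mkQ.comp (LinearMap.inl R K E) with hγK
  set γE : E →ₗ[R] ((K × E) ⧸ D) := D.mkQ.comp (LinearMap.inr R K E) with hγE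
  set p' : ((K × E) ⧸ D) →ₗ[R] Q := D.liftQ (p.comp (LinearMap.snd R K E)) (by
    rintro z ⟨c, rfl⟩
    simp [LinearMap.mem_ker, hex.apply_apply_eq_zero]) with hp'
  have hγKinj : Function.Injective γK := by
    intro k k' hkk
    have hmem : ((k, (0:E)) - (k', (0:E))) ∈ D := by
      rw [← Submodule.Quotient.eq]
      exact hkk
    obtain ⟨c, hc⟩ := hmem
    have hc2 : i c = 0 := by
      have := congrArg Prod.snd hc
      simpa [neg_eq_zero] using this
    have hc0 : c = 0 := hi (by rw [hc2, map_zero])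
    have hc1 : ι c = k - k' := by
      have := congrArg Prod.fst hc
      simpa using this
    rw [hc0, map_zero] at hc1
    rw [← sub_eq_zero, ← hc1]
  have hp'surj : Function.Surjective p' := by
    intro q
    obtain ⟨e, rfl⟩ := hp q
    exact ⟨γE e, rfl⟩
  have hexG : Function.Exact γK p' := by
    intro x
    obtain ⟨z, rfl⟩ := D.mkQ_surjective x
    constructor
    · intro hx
      have hx' : p z.2 = 0 := hx
      obtain ⟨c, hc⟩ := (hex z.2).mp hx'
      refine ⟨z.1 + ι c, ?_⟩
      show Submodule.Quotient.mk (z.1 + ι c, (0:E)) = Submodule.Quotient.mk z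
      rw [Submodule.Quotient.eq]
      refine ⟨c, ?_⟩
      have h5 : (z.1 + ι c, (0:E)) - z = (ι c, -z.2) := by ext <;> simp
      rw [h5]
      ext
      · show ι c = ι c
        rfl
      · show -(i c) = -z.2
        rw [hc]
    · rintro ⟨k, hk⟩
      rw [← hk]
      show p (0:E) = 0
      exact map_zero p
  obtain ⟨σ, hσ⟩ := hK ((K × E) ⧸ D) γK p' hγKinj hp'surj hexG
  set cmap : ((K × E) ⧸ D) →ₗ[R] (K ⧸ LinearMap.range ι) :=
    D.liftQ ((LinearMap.range ι).mkQ.comp (LinearMap.fst R K E)) (by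
      rintro z ⟨c, rfl⟩
      simp only [LinearMap.mem_ker, LinearMap.comp_apply, LinearMap.prod_apply, Pi.prod,
        LinearMap.fst_apply]
      show Submodule.Quotient.mk (ι c) = 0
      rw [Submodule.Quotient.mk_eq_zero]
      exact ⟨c, rfl⟩) with hcmap
  have hTkilled : ∀ a ∈ I, ∀ t : (K ⧸ LinearMap.range ι), a • t = 0 := by
    intro a ha t
    obtain ⟨k, rfl⟩ := (LinearMap.range ι).mkQ_surjective t
    show a • Submodule.Quotient.mk k = 0
    rw [← Submodule.Quotient.mk_smul, Submodule.Quotient.mk_eq_zero]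
    exact hT a ha k
  have hcσ : ∀ q, cmap (σ q) = 0 :=
    hom_eq_zero φ I hsmul hIQ hTkilled (cmap.comp σ)
  have hγEinj : Function.Injective γE := by
    intro e e' hee
    have hmem : (((0:K), e) - ((0:K), e')) ∈ D := by
      rw [← Submodule.Quotient.eq]
      exact hee
    obtain ⟨c, hc⟩ := hmem
    have hc1 : ι c = 0 := by
      have := congrArg Prod.fst hc
      simpa using this
    have hc0 : c = 0 := hι (by rw [hc1, map_zero])
    have hc2 : -(i c) = e - e' := by
      have := congrArg Prod.snd hc
      simpa using this
    rw [hc0, map_zero, neg_zero] at hc2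
    rw [← sub_eq_zero, ← hc2]
  have hmemrange : ∀ q, σ q ∈ LinearMap.range γE := by
    intro q
    obtain ⟨z, hz⟩ := D.mkQ_surjective (σ q)
    have h6 : Submodule.Quotient.mk z.1 = (0 : K ⧸ LinearMap.range ι) := by
      have h7 := hcσ q
      rw [← hz] at h7
      exact h7
    obtain ⟨c, hc⟩ := (Submodule.Quotient.mk_eq_zero _).mp h6
    refine ⟨z.2 + i c, ?_⟩
    rw [← hz]
    show Submodule.Quotient.mk ((0:K), z.2 + i c) = Submodule.Quotient.mk z
    rw [Submodule.Quotient.eq]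
    refine ⟨-c, ?_⟩
    ext
    · show ι (-c) = ((0:K), z.2 + i c).1 - z.1
      rw [map_neg, hc]
      simp
    · show -(i (-c)) = ((0:K), z.2 + i c).2 - z.2
      simp
  set γEe := LinearEquiv.ofInjective γE hγEinj with hγEe
  set σ' : Q →ₗ[R] ↥(LinearMap.range γE) :=
    LinearMap.codRestrict (LinearMap.range γE) σ hmemrange with hσ'
  refine ⟨γEe.symm.toLinearMap.comp σ', ?_⟩
  ext q
  set e' := γEe.symm (σ' q) with he'
  have h8 : γE e' = σ q := by
    have : (γEe e' : (K × E) ⧸ D) = ((σ' q : ↥(LinearMap.range γE)) : (K × E) ⧸ D) := by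
      rw [he', LinearEquiv.apply_symm_apply]
    exact this
  show p e' = q
  have h9 : p e' = p' (γE e') := rfl
  rw [h9, h8]
  exact congrArg (· q) (congrArg DFunLike.coe hσ)

end Sub

end Stmt9Aux

set_option maxHeartbeats 2000000 in
open Stmt9Aux in
theorem stmt9 (R Q : Type u) [Ring R] [Ring Q] (φ : R →+* Q)
    (hinj : Function.Injective φ)
    (hepi : ∀ (T : Type u) [Ring T] (g h : Q →+* T), g.comp φ = h.comp φ → g = h)
    [Module R Q] (hsmul : ∀ (r : R) (q : Q), r • q = φ r * q)
    (hflat : IsFlatMod R Q)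
    (I : TwoSidedIdeal R)
    (hIQ : ∃ (n : ℕ) (a : Fin n → R) (q : Fin n → Q),
      (∀ k, a k ∈ I) ∧ (∑ k, φ (a k) * q k) = 1)
    (hcov : ∀ (M : Type u) [AddCommGroup M] [Module I.ringCon.Quotient M],
      letI : Module R M := Module.compHom M (RingCon.mk' I.ringCon)
      ∃ (S : Type u) (_ : AddCommGroup S) (_ : Module R S) (f : S →ₗ[R] M),
        IsStronglyFlatCover R Q f) :
    ∀ (M : Type u) [AddCommGroup M] [Module I.ringCon.Quotient M],
      ∃ (P : Type u) (_ : AddCommGroup P) (_ : Module I.ringCon.Quotient P)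
        (f : P →ₗ[I.ringCon.Quotient] M),
        Module.Projective I.ringCon.Quotient P ∧ Function.Surjective f ∧
        ∀ N : Submodule I.ringCon.Quotient P, N ⊔ LinearMap.ker f = ⊤ → N = ⊤ := by
  intro M _ _
  letI instRM : Module R M := Module.compHom M (RingCon.mk' I.ringCon)
  obtain ⟨S, iAG, iMS, f, hcv⟩ := hcov M
  -- surjectivity of the cover
  have hfs : Function.Surjective f := by
    obtain ⟨h, hh⟩ := hcv.2.1 _ (sf_free (R := R) (Q := Q) M)
      (Finsupp.linearCombination R (id : M → M))
    intro m
    refine ⟨h (Finsupp.single m 1), ?_⟩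
    have h1 : f (h (Finsupp.single m 1)) =
        Finsupp.linearCombination R (id : M → M) (Finsupp.single m 1) :=
      congrArg (· (Finsupp.single m 1)) (congrArg DFunLike.coe hh)
    rw [h1, Finsupp.linearCombination_single]
    exact one_smul R m
  -- basic facts about `I` in the quotient ring
  have hmks : Function.Surjective (RingCon.mk' I.ringCon) := fun c =>
    Quotient.inductionOn' c (fun r => ⟨r, rfl⟩)
  have hmkI : ∀ a ∈ I, (RingCon.mk' I.ringCon a) = 0 := by
    intro a ha
    show Quotient.mk'' a = Quotient.mk'' 0
    exact Quotient.sound' ((TwoSidedIdeal.rel_iff I a 0).mpr (by simpa using ha))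
  have hcompatM : ∀ (r : R) (m : M), (RingCon.mk' I.ringCon r) • m = r • m := fun r m => rfl
  set IS : Submodule R S := smulSub I S with hISdef
  -- the `R/I`-module structure on `S ⧸ IS`
  letI smulInst : SMul I.ringCon.Quotient (S ⧸ IS) :=
    ⟨fun c x => Quotient.liftOn' c (fun r => r • x) (by
      intro r r' hrr
      have hmem : r - r' ∈ I := (TwoSidedIdeal.rel_iff I r r').mp hrr
      obtain ⟨s, rfl⟩ := IS.mkQ_surjective x
      show r • IS.mkQ s = r' • IS.mkQ s
      have h2 : ∀ u : R, u • IS.mkQ s = IS.mkQ (u • s) := fun u => rfl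
      rw [h2, h2]
      show (Submodule.Quotient.mk (r • s) : S ⧸ IS) = Submodule.Quotient.mk (r' • s)
      rw [Submodule.Quotient.eq, ← sub_smul]
      exact smul_mem_smulSub I hmem s)⟩
  letI modInst : Module I.ringCon.Quotient (S ⧸ IS) :=
    { smul := fun c x => smulInst.smul c x
      one_smul := fun x => show (1:R) • x = x from one_smul R x
      mul_smul := fun c d x => Quotient.inductionOn₂' c d
        (fun r t => show (r * t) • x = r • (t • x) from mul_smul r t x)
      smul_zero := fun c => Quotient.inductionOn' c
        (fun r => show r • (0 : S ⧸ IS) = 0 from smul_zero r)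
      smul_add := fun c x y => Quotient.inductionOn' c
        (fun r => show r • (x + y) = r • x + r • y from smul_add r x y)
      add_smul := fun c d x => Quotient.inductionOn₂' c d
        (fun r t => show (r + t) • x = r • x + t • x from add_smul r t x)
      zero_smul := fun x => show (0:R) • x = 0 from zero_smul R x }
  have hcompat : ∀ (r : R) (x : S ⧸ IS), (RingCon.mk' I.ringCon r) • x = r • x :=
    fun r x => rfl
  -- the induced map
  have hISker : IS ≤ LinearMap.ker f := by
    rintro x ⟨n, a, e, ha, rfl⟩
    show f (∑ k, a k • e k) = 0
    rw [map_sum]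
    refine Finset.sum_eq_zero fun k _ => ?_
    rw [map_smul]
    show a k • f (e k) = 0
    rw [← hcompatM, hmkI _ (ha k), zero_smul]
  set fR : (S ⧸ IS) →ₗ[R] M := IS.liftQ f hISker with hfR
  set fbar : (S ⧸ IS) →ₗ[I.ringCon.Quotient] M :=
    { toFun := fR
      map_add' := fR.map_add
      map_smul' := by
        intro c x
        obtain ⟨r, rfl⟩ := hmks c
        show fR ((RingCon.mk' I.ringCon r) • x) = (RingCon.mk' I.ringCon r) • fR x
        rw [hcompat, hcompatM]
        exact fR.map_smul r x } with hfbar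
  have hfbarsurj : Function.Surjective fbar := by
    intro m
    obtain ⟨s, rfl⟩ := hfs m
    exact ⟨IS.mkQ s, rfl⟩
  -- projectivity of `S ⧸ IS` over `R/I`
  letI instRA : Module R ((S ⧸ IS) →₀ I.ringCon.Quotient) :=
    Module.compHom _ (RingCon.mk' I.ringCon)
  set t : ((S ⧸ IS) →₀ I.ringCon.Quotient) →ₗ[I.ringCon.Quotient] (S ⧸ IS) :=
    Finsupp.linearCombination _ id with ht
  set tR : ((S ⧸ IS) →₀ I.ringCon.Quotient) →ₗ[R] (S ⧸ IS) :=
    { toFun := t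
      map_add' := t.map_add
      map_smul' := fun r x => by
        show t ((RingCon.mk' I.ringCon r) • x) = r • t x
        rw [t.map_smul, hcompat] } with htR
  have htRsurj : Function.Surjective tR := by
    intro x
    refine ⟨Finsupp.single x 1, ?_⟩
    show t (Finsupp.single x 1) = x
    rw [ht, Finsupp.linearCombination_single]
    exact one_smul _ x
  have hK0killed : ∀ a ∈ I, ∀ k : ↥(LinearMap.ker tR), a • k = 0 := by
    intro a ha k
    apply Subtype.ext
    show a • (k : ((S ⧸ IS) →₀ I.ringCon.Quotient)) = 0
    show (RingCon.mk' I.ringCon a) • (k : ((S ⧸ IS) →₀ I.ringCon.Quotient)) = 0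
    rw [hmkI _ ha, zero_smul]
  have hK0MC : MatlisCotorsion R Q ↥(LinearMap.ker tR) :=
    mc_of_killed φ I hsmul hflat hIQ _ hK0killed
  set X : Submodule R (((S ⧸ IS) →₀ I.ringCon.Quotient) × S) :=
    LinearMap.ker ((tR.comp (LinearMap.fst R _ S)) - (IS.mkQ.comp (LinearMap.snd R _ S)))
    with hX
  have memX : ∀ z : ((S ⧸ IS) →₀ I.ringCon.Quotient) × S,
      z ∈ X ↔ tR z.1 = IS.mkQ z.2 := by
    intro z
    simp [hX, LinearMap.mem_ker, sub_eq_zero]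
  set pr2 : ↥X →ₗ[R] S := (LinearMap.snd R _ _).comp X.subtype with hpr2
  have hpr2surj : Function.Surjective pr2 := by
    intro s
    obtain ⟨w, hw⟩ := htRsurj (IS.mkQ s)
    exact ⟨⟨(w, s), (memX _).mpr hw⟩, rfl⟩
  set iX : ↥(LinearMap.ker tR) →ₗ[R] ↥X :=
    LinearMap.codRestrict X ((LinearMap.inl R _ _).comp (LinearMap.ker tR).subtype)
      (fun k => (memX _).mpr (by
        show tR (k : _) = IS.mkQ 0
        rw [map_zero]
        exact k.2)) with hiX
  have hiXinj : Function.Injective iX := by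
    intro k k' hkk
    exact Subtype.ext (congrArg Prod.fst (congrArg Subtype.val hkk))
  have hexX : Function.Exact iX pr2 := by
    intro x
    constructor
    · intro hx
      have hx2 : x.1.2 = 0 := hx
      have h1 : tR x.1.1 = 0 := by
        have h2 := (memX _).mp x.2
        rw [hx2, map_zero] at h2
        exact h2
      refine ⟨⟨x.1.1, h1⟩, ?_⟩
      apply Subtype.ext
      calc (x.1.1, (0:S)) = (x.1.1, x.1.2) := by rw [hx2]
        _ = x.1 := rfl
    · rintro ⟨k, rfl⟩
      rfl
  obtain ⟨σX, hσX⟩ := hcv.1 _ hK0MC ↥X iX pr2 hiXinj hpr2surj (by exact hexX)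
  set τ : S →ₗ[R] ((S ⧸ IS) →₀ I.ringCon.Quotient) :=
    (LinearMap.fst R _ _).comp (X.subtype.comp σX) with hτdef
  have hτ : ∀ s, tR (τ s) = IS.mkQ s := by
    intro s
    have h1 := (memX _).mp (σX s).2
    have h2 : (σX s).1.2 = s := congrArg (· s) (congrArg DFunLike.coe hσX)
    rw [h2] at h1
    exact h1
  have hτkill : IS ≤ LinearMap.ker τ := by
    rintro x ⟨n, a, e, ha, rfl⟩
    show τ (∑ k, a k • e k) = 0
    rw [map_sum]
    refine Finset.sum_eq_zero fun k _ => ?_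
    rw [map_smul]
    show a k • τ (e k) = 0
    show (RingCon.mk' I.ringCon (a k)) • τ (e k) = 0
    rw [hmkI _ (ha k), zero_smul]
  set σ0 : (S ⧸ IS) →ₗ[R] ((S ⧸ IS) →₀ I.ringCon.Quotient) := IS.liftQ τ hτkill with hσ0
  set σb : (S ⧸ IS) →ₗ[I.ringCon.Quotient] ((S ⧸ IS) →₀ I.ringCon.Quotient) :=
    { toFun := σ0
      map_add' := σ0.map_add
      map_smul' := by
        intro c x
        obtain ⟨r, rfl⟩ := hmks c
        show σ0 ((RingCon.mk' I.ringCon r) • x) = (RingCon.mk' I.ringCon r) • σ0 x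
        rw [hcompat]
        show σ0 (r • x) = r • σ0 x
        exact σ0.map_smul r x } with hσb
  have hproj : Module.Projective I.ringCon.Quotient (S ⧸ IS) := by
    refine Module.projective_def.mpr ⟨σb, fun x => ?_⟩
    obtain ⟨s, rfl⟩ := IS.mkQ_surjective x
    show t (τ s) = IS.mkQ s
    exact hτ s
  refine ⟨S ⧸ IS, inferInstance, modInst, fbar, hproj, hfbarsurj, ?_⟩
  intro N hN
  -- N as an R-submodule and its preimage in S
  set NR : Submodule R (S ⧸ IS) :=
    { carrier := N
      add_mem' := fun h1 h2 => N.add_mem h1 h2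
      zero_mem' := N.zero_mem
      smul_mem' := by
        intro r x hx
        show r • x ∈ N
        rw [← hcompat]
        exact N.smul_mem _ hx } with hNRdef
  set N' : Submodule R S := NR.comap IS.mkQ with hN'def
  have hISN' : IS ≤ N' := by
    intro x hx
    show IS.mkQ x ∈ NR
    rw [show IS.mkQ x = 0 from (Submodule.Quotient.mk_eq_zero IS).mpr hx]
    exact N.zero_mem
  have hdecomp : ∀ s : S, ∃ x ∈ N', ∃ k, f k = 0 ∧ s = x + k := by
    intro s
    have hmem : IS.mkQ s ∈ N ⊔ LinearMap.ker fbar := by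
      rw [hN]
      trivial
    obtain ⟨n, hn, k', hk', hnk⟩ := Submodule.mem_sup.mp hmem
    obtain ⟨s₀, hs₀⟩ := IS.mkQ_surjective k'
    have hs₀K : f s₀ = 0 := by
      have h3 : fbar (IS.mkQ s₀) = 0 := by
        rw [hs₀]
        exact hk'
      exact h3
    refine ⟨s - s₀, ?_, s₀, hs₀K, by abel⟩
    show IS.mkQ (s - s₀) ∈ NR
    rw [map_sub, hs₀, ← hnk]
    simpa using (show n ∈ NR from hn)
  -- the kernel of the cover meets `N'` in a Matlis-cotorsion module
  set ι : ↥((LinearMap.ker f) ⊓ N') →ₗ[R] ↥(LinearMap.ker f) :=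
    Submodule.inclusion inf_le_left with hι
  have hT : ∀ a ∈ I, ∀ k : ↥(LinearMap.ker f), a • k ∈ LinearMap.range ι := by
    intro a ha k
    have h1 : a • (k : S) ∈ IS := smul_mem_smulSub I ha _
    have hmem : a • (k : S) ∈ (LinearMap.ker f) ⊓ N' :=
      ⟨(LinearMap.ker f).smul_mem a k.2, hISN' h1⟩
    exact ⟨⟨a • (k : S), hmem⟩, Subtype.ext rfl⟩
  have hKMC : MatlisCotorsion R Q ↥(LinearMap.ker f) := ker_cover_mc f hcv
  have hCMC : MatlisCotorsion R Q ↥((LinearMap.ker f) ⊓ N') :=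
    mc_of_sub φ I hsmul hIQ ι (Submodule.inclusion_injective _) hKMC hT
  -- lift the cover along `N' → M`
  set Y : Submodule R (↥N' × S) :=
    LinearMap.ker ((f.comp (N'.subtype.comp (LinearMap.fst R ↥N' S))) -
      (f.comp (LinearMap.snd R ↥N' S))) with hY
  have memY : ∀ z : ↥N' × S, z ∈ Y ↔ f (z.1 : S) = f z.2 := by
    intro z
    simp [hY, LinearMap.mem_ker, sub_eq_zero]
  set prY : ↥Y →ₗ[R] S := (LinearMap.snd R ↥N' S).comp Y.subtype with hprY
  have hprYsurj : Function.Surjective prY := by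
    intro s
    obtain ⟨x, hx, k, hk, rfl⟩ := hdecomp s
    refine ⟨⟨(⟨x, hx⟩, x + k), (memY _).mpr ?_⟩, rfl⟩
    show f x = f (x + k)
    rw [map_add, hk, add_zero]
  set ι2 : ↥((LinearMap.ker f) ⊓ N') →ₗ[R] ↥N' := Submodule.inclusion inf_le_right with hι2
  set iY : ↥((LinearMap.ker f) ⊓ N') →ₗ[R] ↥Y :=
    LinearMap.codRestrict Y ((LinearMap.inl R ↥N' S).comp ι2) (fun c => (memY _).mpr (by
      show f (c : S) = f 0
      rw [map_zero]
      exact c.2.1)) with hiY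
  have hiYinj : Function.Injective iY := by
    intro c c' hcc
    have h1 := congrArg Prod.fst (congrArg Subtype.val hcc)
    have h2 : ((iY c).1.1 : S) = ((iY c').1.1 : S) := congrArg Subtype.val h1
    exact Subtype.ext h2
  have hexY : Function.Exact iY prY := by
    intro y
    constructor
    · intro hy
      have hy2 : y.1.2 = 0 := hy
      have h1 : f (y.1.1 : S) = 0 := by
        have h2 := (memY _).mp y.2
        rw [hy2, map_zero] at h2
        exact h2
      refine ⟨⟨(y.1.1 : S), ⟨h1, y.1.1.2⟩⟩, ?_⟩
      apply Subtype.ext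
      have h3 : ι2 ⟨(y.1.1 : S), ⟨h1, y.1.1.2⟩⟩ = y.1.1 := Subtype.ext rfl
      calc (ι2 ⟨(y.1.1 : S), ⟨h1, y.1.1.2⟩⟩, (0:S)) = (y.1.1, (0:S)) := by rw [h3]
        _ = (y.1.1, y.1.2) := by rw [hy2]
        _ = y.1 := rfl
    · rintro ⟨c, rfl⟩
      rfl
  obtain ⟨σY, hσY⟩ := hcv.1 _ hCMC _ iY prY hiYinj hprYsurj hexY
  set e : S →ₗ[R] S :=
    N'.subtype.comp ((LinearMap.fst R ↥N' S).comp (Y.subtype.comp σY)) with he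
  have hfe : f.comp e = f := by
    refine LinearMap.ext fun s => ?_
    show f ((σY s).1.1 : S) = f s
    have h1 := (memY _).mp (σY s).2
    have h2 : (σY s).1.2 = s := congrArg (· s) (congrArg DFunLike.coe hσY)
    rw [h1, h2]
  have hbijE := hcv.2.2 e hfe
  have hN'top : ∀ s : S, s ∈ N' := by
    intro s
    obtain ⟨s', hs'⟩ := hbijE.2 s
    rw [← hs']
    exact ((σY s').1.1).2
  rw [Submodule.eq_top_iff']
  intro x
  obtain ⟨s, rfl⟩ := IS.mkQ_surjective x
  exact hN'top s
end

section
/- Let R ⊆ Q be rings such that the inclusion R → Q is an epimorphism in the category of rings and Q is flat as a left R-module. If Q is projective as a left R-module, then Q is finitely generated as a left R-module. -/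
/-!
A ring epimorphism `φ : R → Q` makes restriction of scalars fully faithful: conjugating the
left-multiplication action of `Q` on `M × N` by the shear `(m, n) ↦ (m, n + f m)` gives a
second ring homomorphism `Q → End(M × N)` that agrees with the first on `R` when `f`
is `R`-linear, and equality of the two says that `f` is `Q`-linear. In particular every
`R`-linear form `c` on `Q` satisfies `φ (c q) = q * φ (c 1)`. If `(cₚ, p)` is a dual basis of the
projective module `Q`, then `1 = ∑ φ (cₚ 1) * p` is a finite sum, and multiplying it on the left
by `q` gives `q = ∑ cₚ q • p` with `p` ranging over the same finite set.
-/

universe u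

section RingEpi

variable {R Q : Type u} [Ring R] [Ring Q] (φ : R →+* Q)
  (hepi : ∀ (T : Type u) [Ring T] (g h : Q →+* T), g.comp φ = h.comp φ → g = h)
include hepi

theorem AddMonoidHom.map_smul_of_ringEpi {M N : Type u} [AddCommGroup M] [Module Q M]
    [AddCommGroup N] [Module Q N] (f : M →+ N) (hf : ∀ r m, f (φ r • m) = φ r • f m)
    (q : Q) (m : M) : f (q • m) = q • f m := by
  let ρ : Q →+* Module.End ℤ (M × N) := Module.toModuleEnd ℤ (M × N)
  let shear : (M × N) ≃ₗ[ℤ] M × N :=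
    (LinearEquiv.refl ℤ M).skewProd (.refl ℤ N) f.toIntLinearMap
  have hρ : ρ = (shear.conjRingEquiv : Module.End ℤ (M × N) →+* _).comp ρ := by
    apply hepi
    ext r <;> simp [ρ, shear, LinearEquiv.skewProd_apply, hf]
  have h := congrArg (fun g : Q →+* Module.End ℤ (M × N) => (g q (m, 0)).2) hρ
  simpa [ρ, shear, LinearEquiv.skewProd_apply, eq_neg_add_iff_add_eq, eq_comm] using h

variable [Module R Q] (hsmul : ∀ (r : R) (q : Q), r • q = φ r * q)
include hsmul

theorem LinearMap.map_eq_mul_map_one_of_ringEpi (c : Q →ₗ[R] R) (q : Q) :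
    φ (c q) = q * φ (c 1) := by
  have hc := (φ.toAddMonoidHom.comp c.toAddMonoidHom).map_smul_of_ringEpi φ hepi
    (fun r m => by simp [← hsmul]) q 1
  simpa using hc

end RingEpi

theorem stmt11_general (R Q : Type u) [Ring R] [Ring Q] (φ : R →+* Q)
    (hepi : ∀ (T : Type u) [Ring T] (g h : Q →+* T), g.comp φ = h.comp φ → g = h)
    [Module R Q] (hsmul : ∀ (r : R) (q : Q), r • q = φ r * q)
    (hproj : Module.Projective R Q) :
    Module.Finite R Q := by
  obtain ⟨s, hs⟩ := hproj.out
  have hcoord (q : Q) : ∑ p ∈ (s q).support, s q p • p = q := by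
    simpa [Finsupp.linearCombination_apply, Finsupp.sum] using hs q
  refine ⟨⟨(s 1).support, Submodule.eq_top_iff'.2 fun q => ?_⟩⟩
  have hq : q = ∑ p ∈ (s 1).support, s q p • p := calc
    q = q * ∑ p ∈ (s 1).support, s 1 p • p := by rw [hcoord, mul_one]
    _ = ∑ p ∈ (s 1).support, s q p • p := by
      simp only [Finset.mul_sum, hsmul, ← mul_assoc]
      congr! 2 with p
      exact ((Finsupp.lapply p ∘ₗ s).map_eq_mul_map_one_of_ringEpi φ hepi hsmul q).symm
  rw [hq]
  exact Submodule.sum_mem _ fun p hp => Submodule.smul_mem _ _ (Submodule.subset_span hp)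

theorem stmt11 (R Q : Type u) [Ring R] [Ring Q] (φ : R →+* Q)
    (hinj : Function.Injective φ)
    (hepi : ∀ (T : Type u) [Ring T] (g h : Q →+* T), g.comp φ = h.comp φ → g = h)
    [Module R Q] (hsmul : ∀ (r : R) (q : Q), r • q = φ r * q)
    (hflat : IsFlatMod R Q)
    (hproj : Module.Projective R Q) :
    Module.Finite R Q :=
  stmt11_general R Q φ hepi hsmul hproj
end

section
/- Let R be a ring and S a multiplicatively closed subset of regular elements of R that is a right denominator (right Ore) set, and let Q := R[S⁻¹] be the right ring of fractions. If Q is projective as a left R-module, then every element of S is invertible in R; consequently Q = R. -/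
/-!
Projectivity gives a dual basis expansion `1 = ∑ gₓ • x` in `Q` with `gₓ ∈ R`. Since the
coordinates are `R`-linear and `1 = s • (φ s)⁻¹`, every coefficient `gₓ` is left divisible by
every `s ∈ S`. Clearing denominators with a common `t ∈ S` (`x * φ t = φ aₓ`) gives
`t = ∑ gₓ aₓ` in `R`; writing `gₓ = t s hₓ` yields `φ t = φ t * φ (s c)` with `c = ∑ hₓ aₓ`,
so `s c = 1` because `φ t` is a unit and `φ` is injective. As `φ s` is a unit, the right
inverse `c` is also a left inverse, and every fraction `φ r * (φ s)⁻¹` lies in the image of `φ`.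
-/

universe u

theorem isUnit_of_mul_eq_one_of_isUnit_map {M N F : Type*} [Monoid M] [Monoid N] [FunLike F M N]
    [MonoidHomClass F M N] {f : F} (hf : Function.Injective f) {a b : M} (ha : IsUnit (f a))
    (hab : a * b = 1) : IsUnit a := by
  have hinv : ↑ha.unit⁻¹ = f b :=
    Units.inv_eq_of_mul_eq_one_right (by rw [ha.unit_spec, ← map_mul, hab, map_one])
  have hba : b * a = 1 := hf <| by rw [map_mul, map_one, ← hinv, ha.val_inv_mul]
  exact ⟨⟨a, b, hab, hba⟩, rfl⟩

section RightFractions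

variable {R Q : Type*} [Ring R] [Ring Q] {S : Submonoid R} {φ : R →+* Q}

theorem exists_common_denominator_s12 (hunit : ∀ s ∈ S, IsUnit (φ s))
    (hfrac : ∀ q : Q, ∃ (r : R) (s : R), s ∈ S ∧ q * φ s = φ r) (F : Finset Q) :
    ∃ t ∈ S, ∀ x ∈ F, ∃ a : R, x * φ t = φ a := by
  classical
  induction F using Finset.induction_on with
  | empty => exact ⟨1, S.one_mem, by simp⟩
  | insert q F _ ih =>
    obtain ⟨t, htS, ht⟩ := ih
    obtain ⟨r, t₀, ht₀S, hq⟩ := hfrac q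
    -- the right Ore condition `t₀ s' = t a'`, read off the fraction `(φ t)⁻¹ * φ t₀`
    obtain ⟨a', s', hs'S, hfrac'⟩ := hfrac (↑(hunit t htS).unit⁻¹ * φ t₀)
    have hore : φ (t₀ * s') = φ t * φ a' := by
      rw [← hfrac', ← mul_assoc, ← mul_assoc, (hunit t htS).mul_val_inv, one_mul, map_mul]
    refine ⟨t₀ * s', S.mul_mem ht₀S hs'S, ?_⟩
    intro x hx
    rcases Finset.mem_insert.mp hx with rfl | hx
    · exact ⟨r * s', by rw [map_mul, ← mul_assoc, hq, map_mul]⟩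
    · obtain ⟨a, ha⟩ := ht x hx
      exact ⟨a * a', by rw [hore, ← mul_assoc, ha, map_mul]⟩

theorem exists_finsupp_sum_eq_one_of_projective [Module R Q]
    (hsmul : ∀ (r : R) (q : Q), r • q = φ r * q) (hproj : Module.Projective R Q) (hunit : ∀ s ∈ S, IsUnit (φ s)) :
    ∃ g : Q →₀ R, g.sum (fun x r => φ r * x) = 1 ∧ ∀ u ∈ S, ∃ h : Q →₀ R, g = u • h := by
  obtain ⟨σ, hσ⟩ := Module.projective_def.mp hproj
  refine ⟨σ 1, ?_, fun u hu => ⟨σ ↑(hunit u hu).unit⁻¹, ?_⟩⟩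
  · simpa only [Finsupp.linearCombination_apply, id, hsmul] using hσ 1
  · rw [← map_smul, hsmul, (hunit u hu).mul_val_inv]

theorem exists_mul_eq_one_of_finsupp_sum_eq_one (hinj : Function.Injective φ)
    (hunit : ∀ s ∈ S, IsUnit (φ s)) (hfrac : ∀ q : Q, ∃ (r : R) (s : R), s ∈ S ∧ q * φ s = φ r)
    {g : Q →₀ R} (hg : g.sum (fun x r => φ r * x) = 1) (hdvd : ∀ u ∈ S, ∃ h : Q →₀ R, g = u • h)
    {s : R} (hs : s ∈ S) : ∃ c, s * c = 1 := by
  obtain ⟨t, htS, ht⟩ := exists_common_denominator_s12 hunit hfrac g.support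
  choose! A hA using ht
  obtain ⟨h, rfl⟩ := hdvd (t * s) (S.mul_mem htS hs)
  refine ⟨h.sum fun x r => r * A x, hinj ((hunit t htS).mul_right_injective ?_)⟩
  calc φ t * φ (s * h.sum fun x r => r * A x)
      = ((t * s) • h).sum (fun x r => φ r * φ (A x)) := by
        simp only [Finsupp.sum_smul_index, zero_mul, map_zero, map_mul, map_finsuppSum,
          Finsupp.mul_sum, mul_assoc, implies_true]
    _ = (((t * s) • h).sum fun x r => φ r * x) * φ t := by
        rw [Finsupp.sum_mul]
        exact Finset.sum_congr rfl fun x hx => by simp only [mul_assoc, hA x hx]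
    _ = φ t * φ 1 := by rw [hg, one_mul, map_one, mul_one]

theorem surjective_of_forall_isUnit (hfrac : ∀ q : Q, ∃ (r : R) (s : R), s ∈ S ∧ q * φ s = φ r)
    (hS : ∀ s ∈ S, IsUnit s) : Function.Surjective φ := by
  intro q
  obtain ⟨r, s, hs, hq⟩ := hfrac q
  obtain ⟨v, rfl⟩ := hS s hs
  refine ⟨r * ↑v⁻¹, ?_⟩
  rw [map_mul, ← hq, mul_assoc, ← map_mul, Units.mul_inv, map_one, mul_one]

end RightFractions

theorem stmt12_general (R Q : Type u) [Ring R] [Ring Q] (S : Submonoid R)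
    (φ : R →+* Q) (hinj : Function.Injective φ)
    (hunit : ∀ s ∈ S, IsUnit (φ s))
    (hfrac : ∀ q : Q, ∃ (r : R) (s : R), s ∈ S ∧ q * φ s = φ r)
    [Module R Q] (hsmul : ∀ (r : R) (q : Q), r • q = φ r * q)
    (hproj : Module.Projective R Q) :
    (∀ s ∈ S, IsUnit s) ∧ Function.Surjective φ := by
  obtain ⟨g, hg, hdvd⟩ := exists_finsupp_sum_eq_one_of_projective hsmul hproj hunit
  have hS : ∀ s ∈ S, IsUnit s := fun s hs =>
    let ⟨_, hc⟩ := exists_mul_eq_one_of_finsupp_sum_eq_one hinj hunit hfrac hg hdvd hs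
    isUnit_of_mul_eq_one_of_isUnit_map hinj (hunit s hs) hc
  exact ⟨hS, surjective_of_forall_isUnit hfrac hS⟩

theorem stmt12 (R Q : Type u) [Ring R] [Ring Q] (S : Submonoid R)
    (hreg : ∀ s ∈ S, IsRegular s)
    (hOre : ∀ (a : R), ∀ s ∈ S, ∃ (a' : R) (s' : R), s' ∈ S ∧ a * s' = s * a')
    (φ : R →+* Q) (hinj : Function.Injective φ)
    (hunit : ∀ s ∈ S, IsUnit (φ s))
    (hfrac : ∀ q : Q, ∃ (r : R) (s : R), s ∈ S ∧ q * φ s = φ r)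
    [Module R Q] (hsmul : ∀ (r : R) (q : Q), r • q = φ r * q)
    (hproj : Module.Projective R Q) :
    (∀ s ∈ S, IsUnit s) ∧ Function.Surjective φ :=
  stmt12_general R Q S φ hinj hunit hfrac hsmul hproj
end
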